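/- arXiv:2004.09161 — 9 statements merged into one kernel-verified Lean document; each statement's English description precedes it below -/
import Mathlib

section
/- Let (y_t)_{t∈ℤ} be covariance-stationary white noise with variance σ² > 0, and for integers m ≥ 1 and 0 ≤ n ≤ 2^m − 1 define the MODWPT component W_{m,n,t} = ∑_{l∈ℤ} v_{m,n,l} y_{t−l} (a finite sum of square-integrable random variables). Then for every m ≥ 1, every 0 ≤ n ≤ 2^m − 1 and every t ∈ ℤ, the wavelet variance ratio satisfies Var(W_{m,n,t}) / Var(y_t) = 1/2^m. -/
open MeasureTheory ProbabilityTheory Filter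

/-- Filter selector `u_n`: equals `g` if `n mod 4 ∈ {0,3}` and `h` if `n mod 4 ∈ {1,2}`. -/
noncomputable def uF (g h : ℤ → ℝ) (n : ℕ) : ℤ → ℝ :=
  fun l => if n % 4 = 0 ∨ n % 4 = 3 then g l else h l

/-- MODWPT wavelet packet filters `v_{m,n}`, defined recursively by `v_{1,0} = g`,
`v_{1,1} = h`, and `v_{m,n,l} = ∑_k u_{n,k} v_{m-1, ⌊n/2⌋, l - 2^(m-1) k}`. -/
noncomputable def wp (g h : ℤ → ℝ) : ℕ → ℕ → ℤ → ℝ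
  | 0, _, _ => 0
  | 1, n, l => if n = 0 then g l else h l
  | (m + 2), n, l => ∑ᶠ k : ℤ, uF g h n k * wp g h (m + 1) (n / 2) (l - 2 ^ (m + 1) * k)

/-!
A filter `f` is shift-orthogonal at lag `p` with energy `a` when `∑ₗ f l f (l + p j) = a δⱼ`.
Both `h` and `g` are shift-orthogonal at lag `2` with energy `1/2`: for `h` this is the
hypothesis, and the alternating flip defining `g` preserves autocorrelations at even lags.
Convolving a filter `v` that is shift-orthogonal at lag `c` with the `c`-fold upsampling of a
filter `u` that is shift-orthogonal at lag `p` gives a filter that is shift-orthogonal at lag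
`c p`, with the product of the energies. Since the packet recursion is exactly such a
convolution, `v_{m,n}` is shift-orthogonal at lag `2^m` with energy `2^{-m}`; in particular
`∑ₗ v_{m,n,l}² = 2^{-m}`.
Finally, for uncorrelated `y` of variance `σ²`, `Var (∑ₗ c l y (t - l)) = σ² ∑ₗ c l²`.
-/

open Function

noncomputable def upsampleConv (u v : ℤ → ℝ) (c : ℤ) (l : ℤ) : ℝ :=
  ∑ᶠ k, u k * v (l - c * k)

def IsShiftOrthogonal (f : ℤ → ℝ) (p : ℤ) (a : ℝ) : Prop :=
  ∀ j, ∑ᶠ l, f l * f (l + p * j) = if j = 0 then a else 0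

lemma IsShiftOrthogonal.finsum_sq {f : ℤ → ℝ} {p : ℤ} {a : ℝ} (hf : IsShiftOrthogonal f p a) :
    ∑ᶠ l, f l ^ 2 = a := by
  simpa [sq] using hf 0

section upsampleConv

variable {u v : ℤ → ℝ} {c : ℤ}

lemma upsampleConv_eq_sum (hu : u.HasFiniteSupport) (l : ℤ) :
    upsampleConv u v c l = ∑ k ∈ hu.toFinset, u k * v (l - c * k) :=
  finsum_eq_sum_of_support_subset _ fun _ hk =>
    (Set.Finite.mem_toFinset hu).2 (support_mul_subset_left _ _ hk)

lemma hasFiniteSupport_upsampleConv (hu : u.HasFiniteSupport) (hv : v.HasFiniteSupport) :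
    (upsampleConv u v c).HasFiniteSupport := by
  refine (hu.image2 (fun k x => c * k + x) hv).subset fun l hl => ?_
  obtain ⟨k, hk⟩ : ∃ k, u k * v (l - c * k) ≠ 0 := by
    by_contra! h
    exact hl (finsum_eq_zero_of_forall_eq_zero h)
  exact ⟨k, left_ne_zero_of_mul hk, l - c * k, right_ne_zero_of_mul hk, by ring⟩

variable {a : ℝ}

lemma finsum_mul_upsampleConv (hu : u.HasFiniteSupport) (hv : v.HasFiniteSupport)
    (hvo : IsShiftOrthogonal v c a) (i : ℤ) :
    ∑ᶠ l, v l * upsampleConv u v c (l + c * i) = a * u i := by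
  calc ∑ᶠ l, v l * upsampleConv u v c (l + c * i)
      = ∑ᶠ l, ∑ k ∈ hu.toFinset, u k * (v l * v (l + c * (i - k))) := by
        refine finsum_congr fun l => ?_
        rw [upsampleConv_eq_sum hu, Finset.mul_sum]
        refine Finset.sum_congr rfl fun k _ => ?_
        ring_nf
    _ = ∑ k ∈ hu.toFinset, u k * ∑ᶠ l, v l * v (l + c * (i - k)) := by
        rw [finsum_sum_comm _ _ fun k _ => by fun_prop]
        exact Finset.sum_congr rfl fun k _ => (mul_finsum _ _).symm
    _ = ∑ k ∈ hu.toFinset, if k = i then a * u i else 0 := by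
        refine Finset.sum_congr rfl fun k _ => ?_
        rw [hvo]
        by_cases hki : k = i
        · simp [hki, mul_comm]
        · simp [sub_eq_zero, Ne.symm hki, hki]
    _ = a * u i := by
        rw [Finset.sum_ite_eq']
        split_ifs with h
        · rfl
        · rw [Set.Finite.mem_toFinset hu, mem_support, not_not] at h
          rw [h, mul_zero]

variable {p : ℤ} {b : ℝ}

lemma isShiftOrthogonal_upsampleConv (hu : u.HasFiniteSupport) (hv : v.HasFiniteSupport)
    (huo : IsShiftOrthogonal u p b) (hvo : IsShiftOrthogonal v c a) :
    IsShiftOrthogonal (upsampleConv u v c) (c * p) (a * b) := by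
  intro j
  calc ∑ᶠ l, upsampleConv u v c l * upsampleConv u v c (l + c * p * j)
      = ∑ᶠ l, ∑ k ∈ hu.toFinset, u k * (v (l - c * k) * upsampleConv u v c (l + c * p * j)) := by
        refine finsum_congr fun l => ?_
        rw [upsampleConv_eq_sum hu, Finset.sum_mul]
        exact Finset.sum_congr rfl fun k _ => mul_assoc _ _ _
    _ = ∑ k ∈ hu.toFinset, u k * ∑ᶠ l, v l * upsampleConv u v c (l + c * (k + p * j)) := by
        rw [finsum_sum_comm _ _ fun k _ => by fun_prop (disch := exact sub_left_injective)]
        refine Finset.sum_congr rfl fun k _ => ?_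
        rw [← mul_finsum, ← finsum_comp_equiv (Equiv.addRight (c * k))]
        simp only [Equiv.coe_addRight, add_sub_cancel_right, mul_add, mul_assoc, add_assoc]
    _ = a * ∑ᶠ k, u k * u (k + p * j) := by
        rw [finsum_eq_sum_of_support_subset _ (s := hu.toFinset) fun _ hk =>
          (Set.Finite.mem_toFinset hu).2 (support_mul_subset_left _ _ hk), Finset.mul_sum]
        refine Finset.sum_congr rfl fun k _ => ?_
        rw [finsum_mul_upsampleConv hu hv hvo]
        ring
    _ = if j = 0 then a * b else 0 := by
        rw [huo]
        split_ifs <;> simp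

end upsampleConv

lemma isShiftOrthogonal_two_of_alternating_flip {g h : ℤ → ℝ} {a : ℝ} (N : ℤ)
    (hg : ∀ l, g l = (-1) ^ (l + 1) * h (N - l)) (hh : IsShiftOrthogonal h 2 a) :
    IsShiftOrthogonal g 2 a := by
  intro j
  have hsign (l : ℤ) : (-1 : ℝ) ^ (l + 1) * (-1) ^ (l + 2 * j + 1) = 1 := by
    rw [← zpow_add₀ (by norm_num)]
    exact Even.neg_one_zpow ⟨l + j + 1, by ring⟩
  calc ∑ᶠ l, g l * g (l + 2 * j)
      = ∑ᶠ l, h (N - 2 * j - l) * h (N - 2 * j - l + 2 * j) := by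
        refine finsum_congr fun l => ?_
        rw [hg, hg, mul_mul_mul_comm, hsign, one_mul, mul_comm]
        ring_nf
    _ = if j = 0 then a else 0 :=
        (finsum_comp_equiv (Equiv.subLeft (N - 2 * j)) (f := fun l => h l * h (l + 2 * j))).trans
          (hh j)

lemma hasFiniteSupport_alternating_flip {g h : ℤ → ℝ} (N : ℤ)
    (hg : ∀ l, g l = (-1) ^ (l + 1) * h (N - l)) (hh : h.HasFiniteSupport) :
    g.HasFiniteSupport := by
  rw [show g = fun l => (-1) ^ (l + 1) * h (N - l) from funext hg]
  fun_prop (disch := exact sub_right_injective)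

section PacketFilters

variable {g h : ℤ → ℝ}

lemma uF_eq_or (n : ℕ) : uF g h n = g ∨ uF g h n = h := by
  by_cases hn : n % 4 = 0 ∨ n % 4 = 3
  · exact Or.inl (funext fun l => if_pos hn)
  · exact Or.inr (funext fun l => if_neg hn)

lemma wp_one_eq_or (n : ℕ) : wp g h 1 n = g ∨ wp g h 1 n = h := by
  by_cases hn : n = 0
  · exact Or.inl (funext fun l => if_pos hn)
  · exact Or.inr (funext fun l => if_neg hn)

lemma wp_add_two (m n : ℕ) :
    wp g h (m + 2) n = upsampleConv (uF g h n) (wp g h (m + 1) (n / 2)) (2 ^ (m + 1)) :=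
  funext fun l => by rw [wp]; rfl

lemma hasFiniteSupport_wp (hg : g.HasFiniteSupport) (hh : h.HasFiniteSupport) (m n : ℕ) :
    (wp g h (m + 1) n).HasFiniteSupport := by
  induction m generalizing n with
  | zero => rcases wp_one_eq_or (g := g) (h := h) n with e | e <;> rw [e] <;> assumption
  | succ m ih =>
    rw [wp_add_two]
    refine hasFiniteSupport_upsampleConv ?_ (ih _)
    rcases uF_eq_or (g := g) (h := h) n with e | e <;> rw [e] <;> assumption

lemma isShiftOrthogonal_wp {a : ℝ} (hg : g.HasFiniteSupport) (hh : h.HasFiniteSupport)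
    (hgo : IsShiftOrthogonal g 2 a) (hho : IsShiftOrthogonal h 2 a) (m n : ℕ) :
    IsShiftOrthogonal (wp g h (m + 1) n) (2 ^ (m + 1)) (a ^ (m + 1)) := by
  induction m generalizing n with
  | zero => rcases wp_one_eq_or (g := g) (h := h) n with e | e <;> rw [e] <;> simpa
  | succ m ih =>
    rw [wp_add_two, pow_succ (2 : ℤ) (m + 1), pow_succ a (m + 1)]
    rcases uF_eq_or (g := g) (h := h) n with e | e <;> rw [e]
    · exact isShiftOrthogonal_upsampleConv hg (hasFiniteSupport_wp hg hh m _) hgo (ih _)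
    · exact isShiftOrthogonal_upsampleConv hh (hasFiniteSupport_wp hg hh m _) hho (ih _)

end PacketFilters

section WhiteNoise

variable {Ω ι : Type*} [DecidableEq ι] [MeasurableSpace Ω] {μ : Measure Ω}
  [IsProbabilityMeasure μ] {y : ι → Ω → ℝ} {σ2 : ℝ}

lemma covariance_eq_ite_of_white_noise (hL2 : ∀ i, MemLp (y i) 2 μ) (hmean : ∀ i, μ[y i] = 0)
    (hvar : ∀ i, ∫ ω, y i ω ^ 2 ∂μ = σ2)
    (huncorr : ∀ i j, i ≠ j → ∫ ω, y i ω * y j ω ∂μ = 0) (i j : ι) :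
    cov[y i, y j; μ] = if i = j then σ2 else 0 := by
  rw [covariance_eq_sub (hL2 i) (hL2 j), hmean, zero_mul, sub_zero]
  split_ifs with hij
  · subst hij
    simpa [sq] using hvar i
  · exact huncorr i j hij

lemma variance_finsum_mul_of_covariance_eq_ite (hL2 : ∀ i, MemLp (y i) 2 μ)
    (hcov : ∀ i j, cov[y i, y j; μ] = if i = j then σ2 else 0) {c : ι → ℝ}
    (hc : c.HasFiniteSupport) :
    Var[fun ω => ∑ᶠ i, c i * y i ω; μ] = σ2 * ∑ᶠ i, c i ^ 2 := by
  obtain ⟨s, hs⟩ : ∃ s : Finset ι, support c ⊆ s :=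
    ⟨hc.toFinset, fun _ => (Set.Finite.mem_toFinset hc).2⟩
  have hcy (i : ι) : MemLp (fun ω => c i * y i ω) 2 μ := (hL2 i).const_mul (c i)
  simp_rw [finsum_eq_sum_of_support_subset _ ((support_mul_subset_left _ _).trans hs),
    finsum_eq_sum_of_support_subset _ ((support_pow c two_ne_zero).trans_subset hs)]
  rw [← covariance_self (memLp_finsetSum _ fun i _ => hcy i).aestronglyMeasurable.aemeasurable,
    covariance_fun_sum_fun_sum' (fun i _ => hcy i) (fun i _ => hcy i), Finset.mul_sum]
  refine Finset.sum_congr rfl fun i hi => ?_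
  simp only [covariance_const_mul_left, covariance_const_mul_right, hcov, mul_ite, mul_zero]
  rw [Finset.sum_ite_eq s, if_pos hi]
  ring

end WhiteNoise

theorem stmt0_general (Ω : Type) [MeasureSpace Ω] [IsProbabilityMeasure (ℙ : Measure Ω)]
    (y : ℤ → Ω → ℝ) (σ2 : ℝ) (hσ : 0 < σ2)
    (hL2 : ∀ t : ℤ, MemLp (y t) 2)
    (hmean : ∀ t : ℤ, ∫ ω, y t ω = 0)
    (hvar : ∀ t : ℤ, ∫ ω, (y t ω) ^ 2 = σ2)
    (huncorr : ∀ s t : ℤ, s ≠ t → ∫ ω, y s ω * y t ω = 0)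
    (L : ℕ)
    (h : ℤ → ℝ)
    (hsupp : ∀ l : ℤ, (l < 0 ∨ (L : ℤ) ≤ l) → h l = 0)
    (hnorm : ∑ᶠ l : ℤ, (h l) ^ 2 = 1 / 2)
    (horth : ∀ k : ℤ, k ≠ 0 → ∑ᶠ l : ℤ, h l * h (l + 2 * k) = 0)
    (g : ℤ → ℝ) (hgdef : ∀ l : ℤ, g l = (-1 : ℝ) ^ (l + 1) * h ((L : ℤ) - 1 - l))
    (m : ℕ) (hm : 1 ≤ m) (n : ℕ) (t : ℤ) :
    variance (fun ω => ∑ᶠ l : ℤ, wp g h m n l * y (t - l) ω) ℙ / variance (y t) ℙ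
      = 1 / 2 ^ m := by
  obtain ⟨m, rfl⟩ := Nat.exists_eq_add_of_le' hm
  have hcov := covariance_eq_ite_of_white_noise hL2 hmean hvar huncorr
  have hh : h.HasFiniteSupport := (Set.finite_Ico 0 (L : ℤ)).subset fun l hl => by
    by_contra hl'
    rw [Set.mem_Ico, not_and_or, not_le, not_lt] at hl'
    exact hl (hsupp l hl')
  have hho : IsShiftOrthogonal h 2 (1 / 2) := fun j => by
    split_ifs with hj
    · simpa [hj, sq] using hnorm
    · exact horth j hj
  have hg := hasFiniteSupport_alternating_flip _ hgdef hh
  have hgo := isShiftOrthogonal_two_of_alternating_flip _ hgdef hho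
  rw [variance_finsum_mul_of_covariance_eq_ite (y := fun l => y (t - l)) (fun l => hL2 _)
      (fun i j => by simpa using hcov (t - i) (t - j)) (hasFiniteSupport_wp hg hh m n),
    (isShiftOrthogonal_wp hg hh hgo hho m n).finsum_sq, ← covariance_self (hL2 t).aemeasurable,
    hcov, if_pos rfl, mul_div_cancel_left₀ _ hσ.ne', one_div_pow]

/-- For covariance-stationary white noise `y` with variance `σ² > 0`,
the MODWPT-based wavelet variance ratio satisfies
`Var(W_{m,n,t}) / Var(y_t) = 1 / 2^m` for all `m ≥ 1`, `0 ≤ n ≤ 2^m - 1`, `t ∈ ℤ`. -/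
theorem stmt0 (Ω : Type) [MeasureSpace Ω] [IsProbabilityMeasure (ℙ : Measure Ω)]
    (y : ℤ → Ω → ℝ) (σ2 : ℝ) (hσ : 0 < σ2)
    (hL2 : ∀ t : ℤ, MemLp (y t) 2)
    (hmean : ∀ t : ℤ, ∫ ω, y t ω = 0)
    (hvar : ∀ t : ℤ, ∫ ω, (y t ω) ^ 2 = σ2)
    (huncorr : ∀ s t : ℤ, s ≠ t → ∫ ω, y s ω * y t ω = 0)
    (L : ℕ) (hLpos : 0 < L) (hLeven : Even L)
    (h : ℤ → ℝ)
    (hsupp : ∀ l : ℤ, (l < 0 ∨ (L : ℤ) ≤ l) → h l = 0)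
    (hsum0 : ∑ᶠ l : ℤ, h l = 0)
    (hnorm : ∑ᶠ l : ℤ, (h l) ^ 2 = 1 / 2)
    (horth : ∀ k : ℤ, k ≠ 0 → ∑ᶠ l : ℤ, h l * h (l + 2 * k) = 0)
    (g : ℤ → ℝ) (hgdef : ∀ l : ℤ, g l = (-1 : ℝ) ^ (l + 1) * h ((L : ℤ) - 1 - l))
    (m : ℕ) (hm : 1 ≤ m) (n : ℕ) (hn : n ≤ 2 ^ m - 1) (t : ℤ) :
    variance (fun ω => ∑ᶠ l : ℤ, wp g h m n l * y (t - l) ω) ℙ / variance (y t) ℙ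
      = 1 / 2 ^ m :=
  stmt0_general Ω y σ2 hσ hL2 hmean hvar huncorr L h hsupp hnorm horth g hgdef m hm n t
end

section
/- Let (y_t)_{t∈ℤ} be covariance-stationary white noise with variance σ² > 0, and for integers m ≥ 1 and 0 ≤ n ≤ 2^m − 1 define W_{m,n,t} = ∑_{l∈ℤ} v_{m,n,l} y_{t−l}. Then for every m ≥ 1 and every t ∈ ℤ, the variance of y decomposes exactly over the 2^m frequency sub-bands at scale m: Var(y_t) = ∑_{n=0}^{2^m−1} Var(W_{m,n,t}). -/
open MeasureTheory ProbabilityTheory Filter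

open Function

/-! Every packet filter `wp g h m n` is orthogonal to its translates by nonzero multiples of `2 ^ m`
and has energy `2⁻ᵐ`. At `m = 1` this is the wavelet condition on `h`, transported to `g` by the
quadrature-mirror relation; the recursion preserves it, because convolving a filter orthogonal to
its even shifts with a `c`-upsampled filter orthogonal to its `c`-shifts gives a filter orthogonal
to its `2c`-shifts, and energies multiply. For white noise the variance of a filtered series is
`σ²` times the energy of the filter, so each of the `2 ^ m` bands carries `σ² 2⁻ᵐ`. -/

structure HasOrthogonalShifts (v : ℤ → ℝ) (p : ℤ) (e : ℝ) : Prop where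
  hasFiniteSupport : v.HasFiniteSupport
  finsum_mul_shift : ∀ j : ℤ, ∑ᶠ l, v l * v (l + p * j) = if j = 0 then e else 0

namespace HasOrthogonalShifts

variable {u v : ℤ → ℝ} {p c : ℤ} {a b e : ℝ}

lemma finsum_sq (hv : HasOrthogonalShifts v p e) : ∑ᶠ l, v l ^ 2 = e := by
  simpa [sq] using hv.finsum_mul_shift 0

lemma conv_upsample (hu : HasOrthogonalShifts u 2 a) (hv : HasOrthogonalShifts v c b) :
    HasOrthogonalShifts (fun l => ∑ᶠ k, u k * v (l - c * k)) (2 * c) (a * b) := by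
  set S := hu.hasFiniteSupport.toFinset
  have hS : ∀ k ∉ S, u k = 0 := fun k hk => by
    simpa using mt hu.hasFiniteSupport.mem_toFinset.mpr hk
  have hsupp {f : ℤ → ℝ} : support (fun k => u k * f k) ⊆ S := fun k hk =>
    hu.hasFiniteSupport.mem_toFinset.mpr (support_mul_subset_left _ _ hk)
  have hw (l : ℤ) : ∑ᶠ k, u k * v (l - c * k) = ∑ k ∈ S, u k * v (l - c * k) :=
    finsum_eq_sum_of_support_subset _ hsupp
  have hvshift (x : ℤ) : (fun l => v (l - x)).HasFiniteSupport :=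
    hv.hasFiniteSupport.fun_comp_of_injective (sub_left_injective (b := x))
  simp_rw [hw]
  refine ⟨HasFiniteSupport.sum (fun k => (hvshift (c * k)).fun_mul_right _) S, fun j => ?_⟩
  calc ∑ᶠ l, (∑ k ∈ S, u k * v (l - c * k)) *
        ∑ k' ∈ S, u k' * v (l + 2 * c * j - c * k')
      = ∑ᶠ l, ∑ k ∈ S, ∑ k' ∈ S,
          u k * u k' * (v (l - c * k) * v (l - c * k + c * (2 * j + k - k'))) := by
        refine finsum_congr fun l => ?_
        rw [Finset.sum_mul_sum]
        refine Finset.sum_congr rfl fun k _ => Finset.sum_congr rfl fun k' _ => ?_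
        ring_nf
    _ = ∑ k ∈ S, ∑ k' ∈ S,
          u k * u k' * ∑ᶠ l, v (l - c * k) * v (l - c * k + c * (2 * j + k - k')) := by
        rw [← sum_finsum_comm _ _ fun k _ => ?_]
        · refine Finset.sum_congr rfl fun k _ => ?_
          rw [← sum_finsum_comm _ _ fun k' _ => ?_]
          · simp_rw [mul_finsum]
          · exact (((hvshift _).fun_mul_left _).fun_mul_right _)
        · exact HasFiniteSupport.sum (fun k' => ((hvshift _).fun_mul_left _).fun_mul_right _) S
    _ = ∑ k ∈ S, ∑ k' ∈ S, if k + 2 * j = k' then u k * u k' * b else 0 := by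
        refine Finset.sum_congr rfl fun k _ => Finset.sum_congr rfl fun k' _ => ?_
        have htranslate : ∑ᶠ l, v (l - c * k) * v (l - c * k + c * (2 * j + k - k'))
            = ∑ᶠ x, v x * v (x + c * (2 * j + k - k')) :=
          finsum_comp_equiv (Equiv.subRight (c * k))
            (f := fun x => v x * v (x + c * (2 * j + k - k')))
        rw [htranslate, hv.finsum_mul_shift]
        by_cases hk' : k + 2 * j = k'
        · rw [if_pos (by omega), if_pos hk']
        · rw [if_neg (by omega), if_neg hk', mul_zero]
    _ = ∑ k ∈ S, u k * u (k + 2 * j) * b := by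
        refine Finset.sum_congr rfl fun k _ => ?_
        rw [Finset.sum_ite_eq]
        split_ifs with hk
        · rfl
        · rw [hS _ hk, mul_zero, zero_mul]
    _ = (∑ᶠ k, u k * u (k + 2 * j)) * b := by
        rw [← Finset.sum_mul, finsum_eq_sum_of_support_subset _ hsupp]
    _ = if j = 0 then a * b else 0 := by
        rw [hu.finsum_mul_shift]
        split_ifs <;> simp

lemma quadratureMirror {h : ℤ → ℝ} (hh : HasOrthogonalShifts h 2 e) (N : ℤ) :
    HasOrthogonalShifts (fun l => (-1 : ℝ) ^ (l + 1) * h (N - l)) 2 e := by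
  have hflip := hh.hasFiniteSupport.fun_comp_of_injective (sub_right_injective (b := N))
  refine ⟨hflip.fun_mul_right _, fun j => ?_⟩
  have hsign (l : ℤ) : (-1 : ℝ) ^ (l + 1) * (-1 : ℝ) ^ (l + 2 * j + 1) = 1 := by
    rw [← zpow_add₀ (by norm_num)]
    exact Even.neg_one_zpow ⟨l + j + 1, by ring⟩
  calc ∑ᶠ l, (-1 : ℝ) ^ (l + 1) * h (N - l) *
        ((-1 : ℝ) ^ (l + 2 * j + 1) * h (N - (l + 2 * j)))
      = ∑ᶠ l, h (N - l) * h (N - l + 2 * -j) := finsum_congr fun l => by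
        rw [mul_mul_mul_comm, hsign, one_mul]
        ring_nf
    _ = ∑ᶠ x, h x * h (x + 2 * -j) :=
        finsum_comp_equiv (Equiv.subLeft N) (f := fun x => h x * h (x + 2 * -j))
    _ = if j = 0 then e else 0 := by
        simp only [hh.finsum_mul_shift, neg_eq_zero]

end HasOrthogonalShifts

lemma hasOrthogonalShifts_uF {g h : ℤ → ℝ} {e : ℝ} (hg : HasOrthogonalShifts g 2 e)
    (hh : HasOrthogonalShifts h 2 e) (n : ℕ) : HasOrthogonalShifts (uF g h n) 2 e := by
  by_cases hn : n % 4 = 0 ∨ n % 4 = 3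
  · rwa [show uF g h n = g from funext fun _ => if_pos hn]
  · rwa [show uF g h n = h from funext fun _ => if_neg hn]

lemma hasOrthogonalShifts_wp {g h : ℤ → ℝ} (hg : HasOrthogonalShifts g 2 (1 / 2))
    (hh : HasOrthogonalShifts h 2 (1 / 2)) (m n : ℕ) :
    HasOrthogonalShifts (wp g h (m + 1) n) (2 ^ (m + 1)) ((1 / 2) ^ (m + 1)) := by
  induction m generalizing n with
  | zero =>
    by_cases hn : n = 0
    · simpa [wp, hn] using hg
    · simpa [wp, hn] using hh
  | succ m ih =>
    have hwp : wp g h (m + 2) n =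
        fun l => ∑ᶠ k, uF g h n k * wp g h (m + 1) (n / 2) (l - 2 ^ (m + 1) * k) := by
      funext l; rw [wp]
    have := (hasOrthogonalShifts_uF hg hh n).conv_upsample (ih (n / 2))
    rwa [← pow_succ', ← pow_succ', ← hwp] at this

section WhiteNoise

variable {Ω : Type*} {mΩ : MeasurableSpace Ω} {μ : Measure Ω} {y : ℤ → Ω → ℝ}
  {σ2 : ℝ}

lemma covariance_eq_ite_of_uncorrelated [IsProbabilityMeasure μ] (hL2 : ∀ t, MemLp (y t) 2 μ)
    (hmean : ∀ t, ∫ ω, y t ω ∂μ = 0) (hvar : ∀ t, ∫ ω, y t ω ^ 2 ∂μ = σ2)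
    (huncorr : ∀ s t, s ≠ t → ∫ ω, y s ω * y t ω ∂μ = 0) (s t : ℤ) :
    cov[y s, y t; μ] = if s = t then σ2 else 0 := by
  rw [covariance_eq_sub (hL2 s) (hL2 t), hmean s, hmean t, mul_zero, sub_zero]
  split_ifs with hst
  · subst hst
    simpa [sq] using hvar s
  · exact huncorr s t hst

lemma variance_finsum_mul_of_covariance [IsFiniteMeasure μ] (hL2 : ∀ t, MemLp (y t) 2 μ)
    (hcov : ∀ s t, cov[y s, y t; μ] = if s = t then σ2 else 0) {v : ℤ → ℝ}
    (hv : v.HasFiniteSupport) (t : ℤ) :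
    Var[fun ω => ∑ᶠ l, v l * y (t - l) ω; μ] = σ2 * ∑ᶠ l, v l ^ 2 := by
  set S := hv.toFinset
  have hsupp {f : ℤ → ℝ} : support (fun l => v l * f l) ⊆ S := fun l hl =>
    hv.mem_toFinset.mpr (support_mul_subset_left _ _ hl)
  have hsum :
      (fun ω => ∑ᶠ l, v l * y (t - l) ω) = fun ω => ∑ l ∈ S, v l * y (t - l) ω :=
    funext fun ω => finsum_eq_sum_of_support_subset _ hsupp
  have hsq : support (fun l => v l ^ 2) ⊆ S := by simpa only [sq] using hsupp (f := v)
  rw [hsum, variance_fun_sum' fun l _ => (hL2 _).const_mul (v l),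
    finsum_eq_sum_of_support_subset _ hsq, Finset.mul_sum]
  refine Finset.sum_congr rfl fun l hl => ?_
  calc ∑ l' ∈ S, cov[fun ω => v l * y (t - l) ω, fun ω => v l' * y (t - l') ω; μ]
      = ∑ l' ∈ S, if l = l' then v l * v l' * σ2 else 0 := by
        refine Finset.sum_congr rfl fun l' _ => ?_
        rw [covariance_const_mul_left, covariance_const_mul_right, hcov]
        by_cases hll' : l = l'
        · rw [if_pos (by omega), if_pos hll']; ring
        · rw [if_neg (by omega), if_neg hll', mul_zero, mul_zero]
    _ = σ2 * v l ^ 2 := by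
        rw [Finset.sum_ite_eq, if_pos hl]; ring

end WhiteNoise

theorem stmt1_general (Ω : Type) [MeasureSpace Ω] [IsProbabilityMeasure (ℙ : Measure Ω)]
    (y : ℤ → Ω → ℝ) (σ2 : ℝ)
    (hL2 : ∀ t : ℤ, MemLp (y t) 2)
    (hmean : ∀ t : ℤ, ∫ ω, y t ω = 0)
    (hvar : ∀ t : ℤ, ∫ ω, (y t ω) ^ 2 = σ2)
    (huncorr : ∀ s t : ℤ, s ≠ t → ∫ ω, y s ω * y t ω = 0)
    (L : ℕ)
    (h : ℤ → ℝ)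
    (hsupp : ∀ l : ℤ, (l < 0 ∨ (L : ℤ) ≤ l) → h l = 0)
    (hnorm : ∑ᶠ l : ℤ, (h l) ^ 2 = 1 / 2)
    (horth : ∀ k : ℤ, k ≠ 0 → ∑ᶠ l : ℤ, h l * h (l + 2 * k) = 0)
    (g : ℤ → ℝ) (hgdef : ∀ l : ℤ, g l = (-1 : ℝ) ^ (l + 1) * h ((L : ℤ) - 1 - l))
    (m : ℕ) (hm : 1 ≤ m) (t : ℤ) :
    variance (y t) ℙ
      = ∑ n ∈ Finset.range (2 ^ m),
          variance (fun ω => ∑ᶠ l : ℤ, wp g h m n l * y (t - l) ω) ℙ := by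
  have hh : HasOrthogonalShifts h 2 (1 / 2) := by
    refine ⟨(Set.finite_Icc 0 ((L : ℤ) - 1)).subset fun l hl => ?_, fun j => ?_⟩
    · by_contra hout
      exact hl (hsupp l (by simp only [Set.mem_Icc] at hout; omega))
    · split_ifs with hj
      · simpa [hj, sq] using hnorm
      · exact horth j hj
  have hg : HasOrthogonalShifts g 2 (1 / 2) := by
    rw [show g = _ from funext hgdef]
    exact hh.quadratureMirror _
  have hcov := covariance_eq_ite_of_uncorrelated hL2 hmean hvar huncorr
  obtain ⟨m, rfl⟩ : ∃ k, m = k + 1 := ⟨m - 1, by omega⟩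
  have hband (n : ℕ) : variance (fun ω => ∑ᶠ l : ℤ, wp g h (m + 1) n l * y (t - l) ω) ℙ
      = σ2 * (1 / 2) ^ (m + 1) := by
    have hwp := hasOrthogonalShifts_wp hg hh m n
    rw [variance_finsum_mul_of_covariance hL2 hcov hwp.hasFiniteSupport, hwp.finsum_sq]
  rw [← covariance_self (hL2 t).aemeasurable, hcov, if_pos rfl,
    Finset.sum_congr rfl fun n _ => hband n, Finset.sum_const, Finset.card_range, nsmul_eq_mul,
    mul_left_comm, Nat.cast_pow, ← mul_pow]
  norm_num

/-- For covariance-stationary white noise `y` with variance `σ² > 0`,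
the variance decomposes exactly over the `2^m` frequency sub-bands at scale `m`:
`Var(y_t) = ∑_{n=0}^{2^m-1} Var(W_{m,n,t})`. -/
theorem stmt1 (Ω : Type) [MeasureSpace Ω] [IsProbabilityMeasure (ℙ : Measure Ω)]
    (y : ℤ → Ω → ℝ) (σ2 : ℝ) (hσ : 0 < σ2)
    (hL2 : ∀ t : ℤ, MemLp (y t) 2)
    (hmean : ∀ t : ℤ, ∫ ω, y t ω = 0)
    (hvar : ∀ t : ℤ, ∫ ω, (y t ω) ^ 2 = σ2)
    (huncorr : ∀ s t : ℤ, s ≠ t → ∫ ω, y s ω * y t ω = 0)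
    (L : ℕ) (hLpos : 0 < L) (hLeven : Even L)
    (h : ℤ → ℝ)
    (hsupp : ∀ l : ℤ, (l < 0 ∨ (L : ℤ) ≤ l) → h l = 0)
    (hsum0 : ∑ᶠ l : ℤ, h l = 0)
    (hnorm : ∑ᶠ l : ℤ, (h l) ^ 2 = 1 / 2)
    (horth : ∀ k : ℤ, k ≠ 0 → ∑ᶠ l : ℤ, h l * h (l + 2 * k) = 0)
    (g : ℤ → ℝ) (hgdef : ∀ l : ℤ, g l = (-1 : ℝ) ^ (l + 1) * h ((L : ℤ) - 1 - l))
    (m : ℕ) (hm : 1 ≤ m) (t : ℤ) :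
    variance (y t) ℙ
      = ∑ n ∈ Finset.range (2 ^ m),
          variance (fun ω => ∑ᶠ l : ℤ, wp g h m n l * y (t - l) ω) ℙ :=
  stmt1_general Ω y σ2 hL2 hmean hvar huncorr L h hsupp hnorm horth g hgdef m hm t
end

section
/- Let h, g : ℤ → ℝ be finitely supported filters satisfying ∑_{l∈ℤ} h_l h_{l+2k} = (1/2)·δ_{k,0} and ∑_{l∈ℤ} g_l g_{l+2k} = (1/2)·δ_{k,0} for every integer k. Then the wavelet packet filters obtained by cascading satisfy, for every m ≥ 1, every 0 ≤ n ≤ 2^m − 1 and every integer k, the 2^m-shift orthogonality relation ∑_{l∈ℤ} v_{m,n,l} v_{m,n,l+2^m k} = (1/2^m)·δ_{k,0}; in particular ∑_{l∈ℤ} v_{m,n,l}² = 1/2^m. -/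
open MeasureTheory ProbabilityTheory Filter

lemma step (u f : ℤ → ℝ) (hu : (Function.support u).Finite)
    (hf : (Function.support f).Finite)
    (c : ℤ) (hc : 0 < c) (a : ℝ)
    (hu_orth : ∀ k : ℤ, ∑ᶠ l : ℤ, u l * u (l + 2*k) = (1/2) * (if k = 0 then 1 else 0))
    (hf_orth : ∀ k : ℤ, ∑ᶠ l : ℤ, f l * f (l + c*k) = a * (if k = 0 then 1 else 0)) :
    (Function.support (fun l : ℤ => ∑ᶠ k : ℤ, u k * f (l - c*k))).Finite ∧
    ∀ k : ℤ, ∑ᶠ l : ℤ, (∑ᶠ j : ℤ, u j * f (l - c*j)) * (∑ᶠ j : ℤ, u j * f (l + 2*c*k - c*j))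
      = (a/2) * (if k = 0 then 1 else 0) := by
  classical
  set Su : Finset ℤ := hu.toFinset with hSu
  set Sf : Finset ℤ := hf.toFinset with hSf
  have hfin : ∀ x : ℤ, (∑ᶠ k : ℤ, u k * f (x - c*k)) = ∑ k ∈ Su, u k * f (x - c*k) := by
    intro x
    refine finsum_eq_sum_of_support_subset _ ?_
    intro k hk
    have : u k ≠ 0 := left_ne_zero_of_mul hk
    simpa [hSu] using this
  set T : Finset ℤ := Su.biUnion (fun j => Sf.map ⟨fun x => x + c*j, add_left_injective (c*j)⟩)
    with hT
  have hmemT : ∀ (x j : ℤ), j ∈ Su → f (x - c*j) ≠ 0 → x ∈ T := by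
    intro x j hj hfx
    rw [hT, Finset.mem_biUnion]
    refine ⟨j, hj, ?_⟩
    simp only [Finset.mem_map, Function.Embedding.coeFn_mk]
    exact ⟨x - c*j, by simpa [hSf] using hfx, by ring⟩
  have hsupp : (Function.support (fun l : ℤ => ∑ᶠ k : ℤ, u k * f (l - c*k))) ⊆ ↑T := by
    intro x hx
    rw [Function.mem_support, hfin] at hx
    obtain ⟨j, hj, hne⟩ := Finset.exists_ne_zero_of_sum_ne_zero hx
    exact hmemT x j hj (right_ne_zero_of_mul hne)
  refine ⟨Set.Finite.subset T.finite_toSet hsupp, ?_⟩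
  intro k
  -- inner translated sum
  have hinner : ∀ j j' : ℤ, j ∈ Su →
      (∑ l ∈ T, f (l - c*j) * f (l + 2*c*k - c*j'))
        = a * (if j' = j + 2*k then 1 else 0) := by
    intro j j' hj
    have h1 : (∑ᶠ l : ℤ, f (l - c*j) * f (l + 2*c*k - c*j'))
        = ∑ l ∈ T, f (l - c*j) * f (l + 2*c*k - c*j') := by
      refine finsum_eq_sum_of_support_subset _ ?_
      intro x hx
      exact hmemT x j hj (left_ne_zero_of_mul hx)
    rw [← h1]
    have h2 : (∑ᶠ l : ℤ, f (l - c*j) * f (l + 2*c*k - c*j'))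
        = ∑ᶠ l : ℤ, f l * f (l + c*(2*k + j - j')) := by
      rw [← finsum_comp_equiv (Equiv.subRight (c*j))
        (f := fun l => f l * f (l + c*(2*k + j - j')))]
      apply finsum_congr
      intro l
      simp only [Equiv.subRight_apply]
      congr 2
      ring
    rw [h2, hf_orth]
    congr 1
    by_cases hcase : j' = j + 2*k
    · subst hcase
      have hz : 2*k + j - (j + 2*k) = 0 := by ring
      simp [hz]
    · have hz : 2*k + j - j' ≠ 0 := by omega
      simp [hz, hcase]
  have hfinal :
      (∑ᶠ l : ℤ, (∑ᶠ j : ℤ, u j * f (l - c*j)) * (∑ᶠ j : ℤ, u j * f (l + 2*c*k - c*j)))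
        = ∑ l ∈ T, (∑ j ∈ Su, u j * f (l - c*j)) * (∑ j' ∈ Su, u j' * f (l + 2*c*k - c*j')) := by
    have : ∀ l : ℤ, (∑ᶠ j : ℤ, u j * f (l - c*j)) * (∑ᶠ j : ℤ, u j * f (l + 2*c*k - c*j))
        = (∑ j ∈ Su, u j * f (l - c*j)) * (∑ j' ∈ Su, u j' * f (l + 2*c*k - c*j')) := by
      intro l; rw [hfin l, hfin (l + 2*c*k)]
    rw [finsum_congr this]
    refine finsum_eq_sum_of_support_subset _ ?_
    intro x hx
    have hx1 : (∑ j ∈ Su, u j * f (x - c*j)) ≠ 0 := left_ne_zero_of_mul hx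
    obtain ⟨j, hj, hne⟩ := Finset.exists_ne_zero_of_sum_ne_zero hx1
    exact hmemT x j hj (right_ne_zero_of_mul hne)
  rw [hfinal]
  have hswap : (∑ l ∈ T, (∑ j ∈ Su, u j * f (l - c*j)) * (∑ j' ∈ Su, u j' * f (l + 2*c*k - c*j')))
      = ∑ j ∈ Su, ∑ j' ∈ Su, (u j * u j') * ∑ l ∈ T, f (l - c*j) * f (l + 2*c*k - c*j') := by
    have e1 : (∑ l ∈ T, (∑ j ∈ Su, u j * f (l - c*j)) * (∑ j' ∈ Su, u j' * f (l + 2*c*k - c*j')))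
        = ∑ l ∈ T, ∑ j ∈ Su, ∑ j' ∈ Su, (u j * u j') * (f (l - c*j) * f (l + 2*c*k - c*j')) := by
      apply Finset.sum_congr rfl
      intro l _
      rw [Finset.sum_mul_sum]
      apply Finset.sum_congr rfl; intro j _
      apply Finset.sum_congr rfl; intro j' _
      ring
    rw [e1, Finset.sum_comm]
    apply Finset.sum_congr rfl
    intro j _
    rw [Finset.sum_comm]
    apply Finset.sum_congr rfl
    intro j' _
    rw [Finset.mul_sum]
  rw [hswap]
  have e2 : ∀ j ∈ Su, (∑ j' ∈ Su, (u j * u j') * ∑ l ∈ T, f (l - c*j) * f (l + 2*c*k - c*j'))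
      = u j * u (j + 2*k) * a := by
    intro j hj
    have : ∀ j' ∈ Su, (u j * u j') * (∑ l ∈ T, f (l - c*j) * f (l + 2*c*k - c*j'))
        = if j' = j + 2*k then u j * u j' * a else 0 := by
      intro j' _
      rw [hinner j j' hj]
      by_cases hcase : j' = j + 2*k <;> simp [hcase] <;> ring
    rw [Finset.sum_congr rfl this, Finset.sum_ite_eq' Su (j + 2*k) (fun j' => u j * u j' * a)]
    by_cases hmem : j + 2*k ∈ Su
    · simp [hmem]
    · have hz : u (j + 2*k) = 0 := by
        by_contra hne
        exact hmem (by simpa [hSu] using hne)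
      simp [hmem, hz]
  rw [Finset.sum_congr rfl e2]
  have e3 : (∑ j ∈ Su, u j * u (j + 2*k) * a) = (∑ᶠ j : ℤ, u j * u (j + 2*k)) * a := by
    rw [finsum_eq_sum_of_support_subset (s := Su)]
    · rw [Finset.sum_mul]
    · intro x hx
      simpa [hSu] using left_ne_zero_of_mul hx
  rw [e3, hu_orth]
  by_cases hk : k = 0 <;> simp [hk] <;> ring

lemma main (h g : ℤ → ℝ)
    (hhfin : (Function.support h).Finite) (hgfin : (Function.support g).Finite)
    (horth_h : ∀ k : ℤ,
      ∑ᶠ l : ℤ, h l * h (l + 2 * k) = (1 / 2) * (if k = 0 then 1 else 0))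
    (horth_g : ∀ k : ℤ,
      ∑ᶠ l : ℤ, g l * g (l + 2 * k) = (1 / 2) * (if k = 0 then 1 else 0)) :
    ∀ m : ℕ, ∀ n : ℕ,
      (Function.support (wp g h (m+1) n)).Finite ∧
      ∀ k : ℤ, ∑ᶠ l : ℤ, wp g h (m+1) n l * wp g h (m+1) n (l + 2^(m+1)*k)
        = (1/2^(m+1)) * (if k = 0 then 1 else 0) := by
  intro m
  induction m with
  | zero =>
    intro n
    by_cases hn0 : n = 0
    · have e : wp g h 1 n = g := by funext l; simp [wp, hn0]
      rw [e]
      refine ⟨hgfin, fun k => ?_⟩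
      have := horth_g k
      norm_num at this ⊢
      convert this using 2 <;> ring
    · have e : wp g h 1 n = h := by funext l; simp [wp, hn0]
      rw [e]
      refine ⟨hhfin, fun k => ?_⟩
      have := horth_h k
      norm_num at this ⊢
      convert this using 2 <;> ring
  | succ m ih =>
    intro n
    obtain ⟨hf, hf_orth⟩ := ih (n / 2)
    -- the filter uF g h n is either g or h
    have hu : (Function.support (uF g h n)).Finite ∧
        ∀ k : ℤ, ∑ᶠ l : ℤ, uF g h n l * uF g h n (l + 2*k)
          = (1/2) * (if k = 0 then 1 else 0) := by
      by_cases hc4 : n % 4 = 0 ∨ n % 4 = 3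
      · have : uF g h n = g := by funext l; simp [uF, hc4]
        rw [this]; exact ⟨hgfin, horth_g⟩
      · have : uF g h n = h := by funext l; simp [uF, hc4]
        rw [this]; exact ⟨hhfin, horth_h⟩
    have hc : (0:ℤ) < 2^(m+1) := by positivity
    obtain ⟨S1, S2⟩ := step (uF g h n) (wp g h (m+1) (n/2)) hu.1 hf ((2:ℤ)^(m+1)) hc
      (1/2^(m+1)) hu.2 hf_orth
    have ewp : wp g h (m+2) n = fun l : ℤ =>
        ∑ᶠ k : ℤ, uF g h n k * wp g h (m+1) (n/2) (l - 2^(m+1)*k) := by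
      funext l; rfl
    constructor
    · rw [ewp]; exact S1
    · intro k
      have h2c : ((2:ℤ)^(m+1+1)) = 2 * (2:ℤ)^(m+1) := by ring
      have := S2 k
      rw [ewp]
      calc (∑ᶠ l : ℤ, (∑ᶠ j : ℤ, uF g h n j * wp g h (m+1) (n/2) (l - 2^(m+1)*j)) *
              (∑ᶠ j : ℤ, uF g h n j * wp g h (m+1) (n/2) (l + 2^(m+1+1)*k - 2^(m+1)*j)))
          = ∑ᶠ l : ℤ, (∑ᶠ j : ℤ, uF g h n j * wp g h (m+1) (n/2) (l - 2^(m+1)*j)) *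
              (∑ᶠ j : ℤ, uF g h n j * wp g h (m+1) (n/2) (l + 2*(2:ℤ)^(m+1)*k - 2^(m+1)*j)) := by
            apply finsum_congr; intro l; congr 1
            apply finsum_congr; intro j; congr 2; ring
        _ = ((1/2^(m+1))/2) * (if k = 0 then 1 else 0) := this
        _ = (1/2^(m+1+1)) * (if k = 0 then 1 else 0) := by
            congr 1; rw [div_div, ← pow_succ]

/-- If the finitely supported filters `h` and `g` each satisfy the
even-shift orthonormality relation with norm `1/2`, then every wavelet packet filter
`v_{m,n}` satisfies the `2^m`-shift orthonormality relation with norm `1/2^m`. -/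
theorem stmt2 (h g : ℤ → ℝ)
    (hhfin : (Function.support h).Finite) (hgfin : (Function.support g).Finite)
    (horth_h : ∀ k : ℤ,
      ∑ᶠ l : ℤ, h l * h (l + 2 * k) = (1 / 2) * (if k = 0 then 1 else 0))
    (horth_g : ∀ k : ℤ,
      ∑ᶠ l : ℤ, g l * g (l + 2 * k) = (1 / 2) * (if k = 0 then 1 else 0))
    (m : ℕ) (hm : 1 ≤ m) (n : ℕ) (hn : n ≤ 2 ^ m - 1) :
    (∀ k : ℤ, ∑ᶠ l : ℤ, wp g h m n l * wp g h m n (l + 2 ^ m * k)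
        = (1 / 2 ^ m) * (if k = 0 then 1 else 0))
    ∧ ∑ᶠ l : ℤ, (wp g h m n l) ^ 2 = 1 / 2 ^ m := by
  obtain ⟨m', rfl⟩ : ∃ m', m = m' + 1 := ⟨m - 1, by omega⟩
  obtain ⟨_, horth⟩ := main h g hhfin hgfin horth_h horth_g m' n
  refine ⟨horth, ?_⟩
  have := horth 0
  norm_num at this
  rw [one_div, ← this]
  apply finsum_congr
  intro l
  ring
end

section
/- Let L be a positive even integer and let h : ℤ → ℝ satisfy h_l = 0 for l < 0 and for l ≥ L, ∑_{l∈ℤ} h_l = 0, and ∑_{l∈ℤ} h_l h_{l+2k} = (1/2)·δ_{k,0} for every integer k. Define g : ℤ → ℝ by g_l = (−1)^{l+1} h_{L−1−l}. Then (∑_{l∈ℤ} g_l)² = 1. -/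
open Finset

private lemma neg1_zpow_add' (a b : ℤ) : (-1:ℝ)^(a+b) = (-1:ℝ)^a * (-1:ℝ)^b :=
  zpow_add₀ (by norm_num) a b

private lemma neg1_zpow_even' {n : ℤ} (hn : Even n) : (-1:ℝ)^n = 1 := hn.neg_one_zpow

/-- If `h` is a wavelet filter supported in `{0,…,L-1}` (L even, positive)
with `∑ h_l = 0` and even-shift orthonormality with norm `1/2`, then the associated
scaling filter `g_l = (-1)^(l+1) h_{L-1-l}` satisfies `(∑ g_l)² = 1`. -/
theorem stmt5 (L : ℕ) (hLpos : 0 < L) (hLeven : Even L)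
    (h : ℤ → ℝ)
    (hsupp : ∀ l : ℤ, (l < 0 ∨ (L : ℤ) ≤ l) → h l = 0)
    (hsum0 : ∑ᶠ l : ℤ, h l = 0)
    (horth_h : ∀ k : ℤ,
      ∑ᶠ l : ℤ, h l * h (l + 2 * k) = (1 / 2) * (if k = 0 then 1 else 0))
    (g : ℤ → ℝ) (hgdef : ∀ l : ℤ, g l = (-1 : ℝ) ^ (l + 1) * h ((L : ℤ) - 1 - l)) :
    (∑ᶠ l : ℤ, g l) ^ 2 = 1 := by
  have hLZeven : Even (L : ℤ) := by exact_mod_cast hLeven.natCast (α := ℤ)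
  obtain ⟨R, hR⟩ := hLZeven
  set s : Finset ℤ := Finset.Icc 0 ((L:ℤ)-1) with hs
  have hmem : ∀ l : ℤ, l ∉ s → h l = 0 := by
    intro l hl
    apply hsupp
    simp only [hs, Finset.mem_Icc, not_and_or, not_le] at hl
    omega
  -- A = 0
  have hA : ∑ l ∈ s, h l = 0 := by
    rw [← hsum0]
    refine (finsum_eq_sum_of_support_subset _ ?_).symm
    intro l hl
    rw [Finset.mem_coe]
    by_contra hc
    exact hl (hmem l hc)
  -- orthogonality with finite sums
  have horth : ∀ k : ℤ, ∑ l ∈ s, h l * h (l + 2 * k)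
      = (1 / 2 : ℝ) * (if k = 0 then 1 else 0) := by
    intro k
    rw [← horth_h k]
    refine (finsum_eq_sum_of_support_subset _ ?_).symm
    intro l hl
    rw [Finset.mem_coe]
    by_contra hc
    apply hl
    simp [hmem l hc]
  -- sum of g as finite sum
  have hgsum : ∑ᶠ l : ℤ, g l = ∑ l ∈ s, g l := by
    apply finsum_eq_sum_of_support_subset
    intro l hl
    rw [Finset.mem_coe]
    by_contra hc
    apply hl
    have hmem' : ((L:ℤ) - 1 - l) ∉ s := by
      simp only [hs, Finset.mem_Icc, not_and_or, not_le] at hc ⊢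
      omega
    simp [hgdef, hmem _ hmem']
  -- B
  have hB : ∑ l ∈ s, g l = ∑ m ∈ s, (-1:ℝ)^m * h m := by
    refine Finset.sum_nbij' (fun l => (L:ℤ) - 1 - l) (fun m => (L:ℤ) - 1 - m)
      ?_ ?_ ?_ ?_ ?_
    · intro a ha; simp only [hs, Finset.mem_Icc] at ha ⊢; omega
    · intro a ha; simp only [hs, Finset.mem_Icc] at ha ⊢; omega
    · intro a _; ring
    · intro a _; ring
    · intro l _
      rw [hgdef]
      have hev : Even (2 * l + 2 - (L:ℤ)) := ⟨l + 1 - R, by omega⟩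
      have h2 : (-1:ℝ)^(l + 1) = (-1:ℝ)^((L:ℤ) - 1 - l) := by
        have hsplit : (l + 1 : ℤ) = ((L:ℤ) - 1 - l) + (2 * l + 2 - (L:ℤ)) := by ring
        rw [hsplit, neg1_zpow_add', neg1_zpow_even' hev, mul_one]
      show (-1:ℝ)^(l + 1) * h ((L:ℤ) - 1 - l)
          = (-1:ℝ)^((L:ℤ) - 1 - l) * h ((L:ℤ) - 1 - l)
      rw [h2]
  set t : Finset ℤ := Finset.Icc (-(L:ℤ)) (L:ℤ) with ht
  -- key per-l identity
  have hkey : ∀ l ∈ s, ∑ k ∈ t, h (l + 2 * k)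
      = ∑ m ∈ s.filter (fun m => Even (l + m)), h m := by
    intro l hl
    simp only [hs, Finset.mem_Icc] at hl
    have hinj : ∀ k1 ∈ t, ∀ k2 ∈ t, l + 2*k1 = l + 2*k2 → k1 = k2 := by
      intro k1 _ k2 _ hek; omega
    rw [show (∑ k ∈ t, h (l + 2 * k)) = ∑ m ∈ t.image (fun k => l + 2*k), h m from
      (Finset.sum_image hinj).symm]
    refine (Finset.sum_subset ?_ ?_).symm
    · intro m hm
      simp only [Finset.mem_filter, hs, Finset.mem_Icc] at hm
      obtain ⟨⟨h0, h1⟩, he⟩ := hm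
      obtain ⟨r, hr⟩ := he
      refine Finset.mem_image.2 ⟨r - l, ?_, by omega⟩
      simp only [ht, Finset.mem_Icc]
      omega
    · intro m hm hnm
      obtain ⟨k, _, hk⟩ := Finset.mem_image.1 hm
      apply hmem
      intro hms
      exact hnm (Finset.mem_filter.2 ⟨hms, ⟨l + k, by omega⟩⟩)
  -- the main computation
  have e1 : (∑ l ∈ s, h l)^2 + (∑ l ∈ s, (-1:ℝ)^l * h l)^2
      = ∑ l ∈ s, ∑ m ∈ s, (1 + (-1:ℝ)^(l+m)) * (h l * h m) := by
    rw [sq, sq, Finset.sum_mul_sum, Finset.sum_mul_sum, ← Finset.sum_add_distrib]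
    refine Finset.sum_congr rfl fun l _ => ?_
    rw [← Finset.sum_add_distrib]
    refine Finset.sum_congr rfl fun m _ => ?_
    rw [neg1_zpow_add']
    ring
  have e2 : ∀ l ∈ s, ∑ m ∈ s, (1 + (-1:ℝ)^(l+m)) * (h l * h m)
      = 2 * ∑ k ∈ t, h l * h (l + 2 * k) := by
    intro l hl
    calc ∑ m ∈ s, (1 + (-1:ℝ)^(l+m)) * (h l * h m)
        = ∑ m ∈ s, 2 * (h l * (if Even (l+m) then h m else 0)) := by
          refine Finset.sum_congr rfl fun m _ => ?_
          by_cases hp : Even (l + m)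
          · rw [if_pos hp, neg1_zpow_even' hp]; ring
          · rw [if_neg hp, (Int.not_even_iff_odd.mp hp).neg_one_zpow]; ring
      _ = 2 * (h l * ∑ m ∈ s, (if Even (l+m) then h m else 0)) := by
          rw [Finset.mul_sum, Finset.mul_sum]
      _ = 2 * (h l * ∑ m ∈ s.filter (fun m => Even (l + m)), h m) := by
          rw [Finset.sum_filter]
      _ = 2 * (h l * ∑ k ∈ t, h (l + 2 * k)) := by rw [hkey l hl]
      _ = 2 * ∑ k ∈ t, h l * h (l + 2 * k) := by rw [Finset.mul_sum]
  have hmain : (∑ l ∈ s, h l)^2 + (∑ l ∈ s, (-1:ℝ)^l * h l)^2 = 1 := by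
    rw [e1, Finset.sum_congr rfl e2, ← Finset.mul_sum, Finset.sum_comm,
      Finset.sum_congr rfl (fun k _ => horth k), ← Finset.mul_sum,
      Finset.sum_ite_eq' t 0 (fun _ => (1:ℝ))]
    have h0t : (0:ℤ) ∈ t := by simp only [ht, Finset.mem_Icc]; omega
    rw [if_pos h0t]
    norm_num
  rw [hgsum, hB]
  rw [hA] at hmain
  linarith [hmain]
end

section
/- Let L be a positive even integer and let h : ℤ → ℝ satisfy h_l = 0 for l < 0 and for l ≥ L, and ∑_{l∈ℤ} h_l h_{l+2k} = (1/2)·δ_{k,0} for every integer k. Define g : ℤ → ℝ by g_l = (−1)^{l+1} h_{L−1−l}. Then the perfect-reconstruction identity holds for every integer u (not only even u): ∑_{l∈ℤ} ( g_l g_{l+u} + h_l h_{l+u} ) = δ_{u,0}. -/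
/-! The high-pass filter `g` is the alternating flip of `h`, and the substitution `l ↦ L - 1 - u - l`
shows that its autocorrelation at lag `u` is `(-1)^u` times that of `h`. The two autocorrelations
therefore cancel at odd lags, while at even lags `u = 2k` they add up to twice the orthogonality
sum `½ δ_{k,0}`. -/

open Function

section AlternatingFlip

variable {K : Type*} [Field K]

lemma neg_one_zpow_add_one_mul_neg_one_zpow_add_add_one (l u : ℤ) :
    (-1 : K) ^ (l + 1) * (-1) ^ (l + u + 1) = (-1) ^ u := by
  have hne : (-1 : K) ≠ 0 := neg_ne_zero.2 one_ne_zero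
  rw [← zpow_add₀ hne, show l + 1 + (l + u + 1) = u + 2 * (l + 1) by ring, zpow_add₀ hne,
    (even_two_mul _).neg_one_zpow, mul_one]

lemma finsum_mul_shift_alternatingFlip {f g : ℤ → K} {N : ℤ}
    (hg : ∀ l, g l = (-1) ^ (l + 1) * f (N - l)) (u : ℤ) :
    ∑ᶠ l, g l * g (l + u) = (-1) ^ u * ∑ᶠ l, f l * f (l + u) := by
  let e : ℤ ≃ ℤ := Equiv.subLeft (N - u)
  calc ∑ᶠ l, g l * g (l + u)
      = ∑ᶠ l, (-1) ^ u * (f (e l + u) * f (e l)) := by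
        refine finsum_congr fun l => ?_
        rw [hg, hg, ← neg_one_zpow_add_one_mul_neg_one_zpow_add_add_one l u]
        simp only [e, Equiv.subLeft_apply, show N - u - l + u = N - l by ring,
          show N - (l + u) = N - u - l by ring]
        ring
    _ = (-1) ^ u * ∑ᶠ l, f l * f (l + u) := by
        rw [← mul_finsum, finsum_comp_equiv e (f := fun m => f (m + u) * f m)]
        simp only [mul_comm]

end AlternatingFlip

theorem stmt6_general (L : ℕ)
    (h : ℤ → ℝ)
    (hsupp : ∀ l : ℤ, (l < 0 ∨ (L : ℤ) ≤ l) → h l = 0)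
    (horth_h : ∀ k : ℤ,
      ∑ᶠ l : ℤ, h l * h (l + 2 * k) = (1 / 2) * (if k = 0 then 1 else 0))
    (g : ℤ → ℝ) (hgdef : ∀ l : ℤ, g l = (-1 : ℝ) ^ (l + 1) * h ((L : ℤ) - 1 - l))
    (u : ℤ) :
    ∑ᶠ l : ℤ, (g l * g (l + u) + h l * h (l + u)) = if u = 0 then 1 else 0 := by
  have hfin : HasFiniteSupport h := (Set.finite_Ico 0 (L : ℤ)).subset fun l hl =>
    by_contra fun hl' => hl (hsupp l (by rw [Set.mem_Ico] at hl'; omega))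
  have hgfin : HasFiniteSupport g := by
    rw [funext hgdef]
    exact (hfin.fun_comp_of_injective sub_right_injective).fun_mul_right _
  rw [finsum_add_distrib (hgfin.fun_mul_left _) (hfin.fun_mul_left _),
    finsum_mul_shift_alternatingFlip hgdef]
  obtain ⟨k, rfl | rfl⟩ := Int.even_or_odd' u
  · rw [horth_h k, (even_two_mul k).neg_one_zpow]
    simp only [mul_eq_zero, two_ne_zero, false_or]
    split_ifs <;> norm_num
  · rw [(odd_two_mul_add_one k).neg_one_zpow]
    simp only [neg_mul, one_mul, neg_add_cancel]
    rw [if_neg (by omega)]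

/-- If `h` is a wavelet filter supported in `{0,…,L-1}` (L even, positive)
satisfying the even-shift orthonormality relation with norm `1/2`, and `g` is its
associated scaling filter, then the perfect-reconstruction identity holds for every
integer shift `u`: `∑_l (g_l g_{l+u} + h_l h_{l+u}) = δ_{u,0}`. -/
theorem stmt6 (L : ℕ) (hLpos : 0 < L) (hLeven : Even L)
    (h : ℤ → ℝ)
    (hsupp : ∀ l : ℤ, (l < 0 ∨ (L : ℤ) ≤ l) → h l = 0)
    (horth_h : ∀ k : ℤ,
      ∑ᶠ l : ℤ, h l * h (l + 2 * k) = (1 / 2) * (if k = 0 then 1 else 0))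
    (g : ℤ → ℝ) (hgdef : ∀ l : ℤ, g l = (-1 : ℝ) ^ (l + 1) * h ((L : ℤ) - 1 - l))
    (u : ℤ) :
    ∑ᶠ l : ℤ, (g l * g (l + u) + h l * h (l + u)) = if u = 0 then 1 else 0 :=
  stmt6_general L h hsupp horth_h g hgdef u
end

section
/- Let L be a positive even integer and let h : ℤ → ℝ satisfy h_l = 0 for l < 0 and for l ≥ L, and ∑_{l∈ℤ} h_l h_{l+2k} = (1/2)·δ_{k,0} for every integer k; define g : ℤ → ℝ by g_l = (−1)^{l+1} h_{L−1−l}. Then at every scale m ≥ 1 the wavelet packet filters jointly satisfy the perfect-reconstruction identity: for every integer u, ∑_{n=0}^{2^m−1} ∑_{l∈ℤ} v_{m,n,l} v_{m,n,l+u} = δ_{u,0}. -/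
open MeasureTheory ProbabilityTheory Filter

section Aux

/-- sum over doubled range -/
lemma sum_range_two_mul (N : ℕ) (f : ℕ → ℝ) :
    ∑ i ∈ Finset.range (2 * N), f i = ∑ i ∈ Finset.range N, (f (2 * i) + f (2 * i + 1)) := by
  induction N with
  | zero => simp
  | succ n ih =>
    have : 2 * (n + 1) = (2 * n + 1) + 1 := by ring
    rw [this, Finset.sum_range_succ, Finset.sum_range_succ, Finset.sum_range_succ, ih,
      add_assoc]

lemma finsum_shift (f : ℤ → ℝ) (c : ℤ) : ∑ᶠ l : ℤ, f (l + c) = ∑ᶠ l : ℤ, f l :=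
  finsum_comp_equiv (Equiv.addRight c)

lemma finsum_reflect (f : ℤ → ℝ) (c : ℤ) : ∑ᶠ l : ℤ, f (c - l) = ∑ᶠ l : ℤ, f l := by
  have := finsum_comp_equiv (f := f) ((Equiv.neg ℤ).trans (Equiv.addLeft c))
  simpa [sub_eq_add_neg] using this

lemma finsum_eq_sum_Ico (f : ℤ → ℝ) (a b : ℤ)
    (hf : ∀ l : ℤ, l ∉ Finset.Ico a b → f l = 0) :
    ∑ᶠ l : ℤ, f l = ∑ l ∈ Finset.Ico a b, f l := by
  apply finsum_eq_sum_of_support_subset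
  intro l hl
  by_contra hmem
  exact hl (hf l hmem)

variable {L : ℕ} {h g : ℤ → ℝ}

lemma g_supp (hsupp : ∀ l : ℤ, (l < 0 ∨ (L : ℤ) ≤ l) → h l = 0)
    (hgdef : ∀ l : ℤ, g l = (-1 : ℝ) ^ (l + 1) * h ((L : ℤ) - 1 - l)) :
    ∀ l : ℤ, (l < 0 ∨ (L : ℤ) ≤ l) → g l = 0 := by
  intro l hl
  rw [hgdef, hsupp _ (by omega), mul_zero]

lemma uF_supp (hsupp : ∀ l : ℤ, (l < 0 ∨ (L : ℤ) ≤ l) → h l = 0)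
    (hgdef : ∀ l : ℤ, g l = (-1 : ℝ) ^ (l + 1) * h ((L : ℤ) - 1 - l)) (n : ℕ) :
    ∀ l : ℤ, (l < 0 ∨ (L : ℤ) ≤ l) → uF g h n l = 0 := by
  intro l hl
  unfold uF
  split
  · exact g_supp hsupp hgdef l hl
  · exact hsupp l hl

lemma wp_supp (hsupp : ∀ l : ℤ, (l < 0 ∨ (L : ℤ) ≤ l) → h l = 0)
    (hgdef : ∀ l : ℤ, g l = (-1 : ℝ) ^ (l + 1) * h ((L : ℤ) - 1 - l)) :
    ∀ m n (l : ℤ), (l < 0 ∨ (2 ^ m * L : ℤ) ≤ l) → wp g h m n l = 0 := by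
  intro m
  induction m using Nat.twoStepInduction with
  | zero => intro n l _; simp [wp]
  | one =>
    intro n l hl
    have hl' : l < 0 ∨ (L : ℤ) ≤ l := by push_cast at hl ⊢; omega
    show (if n = 0 then g l else h l) = 0
    split
    · exact g_supp hsupp hgdef l hl'
    · exact hsupp l hl'
  | more m _ ih2 =>
    intro n l hl
    show (∑ᶠ k : ℤ, uF g h n k * wp g h (m + 1) (n / 2) (l - 2 ^ (m + 1) * k)) = 0
    apply finsum_eq_zero_of_forall_eq_zero
    intro k
    by_cases hk : k < 0 ∨ (L : ℤ) ≤ k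
    · rw [uF_supp hsupp hgdef n k hk, zero_mul]
    · push_neg at hk
      have hc : (0 : ℤ) < 2 ^ (m + 1) := by positivity
      have hb : l - 2 ^ (m + 1) * k < 0 ∨ (2 ^ (m + 1) * L : ℤ) ≤ l - 2 ^ (m + 1) * k := by
        rcases hl with hl | hl
        · left
          nlinarith [mul_nonneg hc.le hk.1]
        · right
          have h2 : (2 : ℤ) ^ (m + 2) = 2 ^ (m + 1) * 2 := by ring
          rw [h2] at hl
          nlinarith [mul_le_mul_of_nonneg_left (by omega : k ≤ (L : ℤ) - 1) hc.le]
      rw [ih2 (n / 2) _ hb, mul_zero]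

/-- Autocorrelation -/
noncomputable def AC (a : ℤ → ℝ) (d : ℤ) : ℝ := ∑ᶠ l : ℤ, a l * a (l + d)

lemma finsum_const_mul (c : ℝ) (F : ℤ → ℝ) : ∑ᶠ l : ℤ, c * F l = c * ∑ᶠ l : ℤ, F l := by
  have := smul_finsum (M := ℝ) c F
  simpa [smul_eq_mul] using this.symm

lemma ACg (hgdef : ∀ l : ℤ, g l = (-1 : ℝ) ^ (l + 1) * h ((L : ℤ) - 1 - l)) (d : ℤ) :
    AC g d = (-1 : ℝ) ^ d * AC h d := by
  unfold AC
  have step1 : ∀ l : ℤ, g l * g (l + d)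
      = (-1 : ℝ) ^ d * (h ((L : ℤ) - 1 - l) * h ((L : ℤ) - 1 - (l + d))) := by
    intro l
    rw [hgdef l, hgdef (l + d)]
    have hsign : (-1 : ℝ) ^ (l + 1) * (-1 : ℝ) ^ (l + d + 1) = (-1 : ℝ) ^ d := by
      rw [← zpow_add₀ (by norm_num : (-1 : ℝ) ≠ 0)]
      have he : l + 1 + (l + d + 1) = d + 2 * (l + 1) := by ring
      rw [he, zpow_add₀ (by norm_num : (-1 : ℝ) ≠ 0)]
      have h2 : (-1 : ℝ) ^ (2 * (l + 1)) = 1 := Even.neg_one_zpow ⟨l + 1, by ring⟩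
      rw [h2, mul_one]
    calc (-1 : ℝ) ^ (l + 1) * h ((L : ℤ) - 1 - l) * ((-1 : ℝ) ^ (l + d + 1) * h ((L : ℤ) - 1 - (l + d)))
        = ((-1 : ℝ) ^ (l + 1) * (-1 : ℝ) ^ (l + d + 1)) * (h ((L : ℤ) - 1 - l) * h ((L : ℤ) - 1 - (l + d))) := by ring
      _ = (-1 : ℝ) ^ d * (h ((L : ℤ) - 1 - l) * h ((L : ℤ) - 1 - (l + d))) := by rw [hsign]
  have refl1 : ∀ l : ℤ, h ((L : ℤ) - 1 - l) * h ((L : ℤ) - 1 - (l + d))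
      = (fun x : ℤ => h (x + d) * h x) (((L : ℤ) - 1 - d) - l) := by
    intro l
    have e1 : ((L : ℤ) - 1 - d) - l + d = (L : ℤ) - 1 - l := by ring
    have e2 : ((L : ℤ) - 1 - d) - l = (L : ℤ) - 1 - (l + d) := by ring
    show h ((L : ℤ) - 1 - l) * h ((L : ℤ) - 1 - (l + d))
      = h (((L : ℤ) - 1 - d) - l + d) * h (((L : ℤ) - 1 - d) - l)
    rw [e1, e2]
  calc ∑ᶠ l : ℤ, g l * g (l + d)
      = ∑ᶠ l : ℤ, (-1 : ℝ) ^ d * (h ((L : ℤ) - 1 - l) * h ((L : ℤ) - 1 - (l + d))) :=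
        finsum_congr step1
    _ = (-1 : ℝ) ^ d * ∑ᶠ l : ℤ, h ((L : ℤ) - 1 - l) * h ((L : ℤ) - 1 - (l + d)) :=
        finsum_const_mul _ _
    _ = (-1 : ℝ) ^ d * ∑ᶠ l : ℤ, (fun x : ℤ => h (x + d) * h x) (((L : ℤ) - 1 - d) - l) := by
        rw [finsum_congr refl1]
    _ = (-1 : ℝ) ^ d * ∑ᶠ x : ℤ, h (x + d) * h x := by
        rw [finsum_reflect (fun x : ℤ => h (x + d) * h x) ((L : ℤ) - 1 - d)]
    _ = (-1 : ℝ) ^ d * ∑ᶠ x : ℤ, h x * h (x + d) := by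
        rw [finsum_congr (fun x : ℤ => by ring :
          ∀ x : ℤ, h (x + d) * h x = h x * h (x + d))]

lemma key_delta (hsupp : ∀ l : ℤ, (l < 0 ∨ (L : ℤ) ≤ l) → h l = 0)
    (horth_h : ∀ k : ℤ,
      ∑ᶠ l : ℤ, h l * h (l + 2 * k) = (1 / 2) * (if k = 0 then 1 else 0))
    (hgdef : ∀ l : ℤ, g l = (-1 : ℝ) ^ (l + 1) * h ((L : ℤ) - 1 - l)) (d : ℤ) :
    AC g d + AC h d = if d = 0 then 1 else 0 := by
  rcases Int.even_or_odd d with ⟨k, hk⟩ | ⟨k, hk⟩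
  · have hd : d = 2 * k := by omega
    subst hd
    have hACh : AC h (2 * k) = (1 / 2) * (if k = 0 then 1 else 0) := horth_h k
    rw [ACg hgdef, Even.neg_one_zpow ⟨k, by ring⟩, one_mul, hACh]
    by_cases hk0 : k = 0 <;> simp [hk0] <;> norm_num
  · have hd : d = 2 * k + 1 := by omega
    subst hd
    rw [ACg hgdef, Odd.neg_one_zpow ⟨k, rfl⟩]
    have : (2 * k + 1 : ℤ) ≠ 0 := by omega
    simp [this]

lemma not_mem_Ico {a b l : ℤ} (hl : l ∉ Finset.Ico a b) : l < a ∨ b ≤ l := by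
  rw [Finset.mem_Ico] at hl; omega

/-- Per-child expansion of the recursion. -/
lemma childA (hsupp : ∀ l : ℤ, (l < 0 ∨ (L : ℤ) ≤ l) → h l = 0)
    (hgdef : ∀ l : ℤ, g l = (-1 : ℝ) ^ (l + 1) * h ((L : ℤ) - 1 - l))
    (m n' : ℕ) (u : ℤ) :
    ∑ᶠ l : ℤ, wp g h (m + 2) n' l * wp g h (m + 2) n' (l + u)
      = ∑ k ∈ Finset.Ico (-(L : ℤ)) (L : ℤ),
          (∑ j ∈ Finset.Ico (0 : ℤ) (L : ℤ), uF g h n' j * uF g h n' (j + k)) *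
          (∑ᶠ l : ℤ, wp g h (m + 1) (n' / 2) l
            * wp g h (m + 1) (n' / 2) (l + (u - 2 ^ (m + 1) * k))) := by
  have ha0 := uF_supp hsupp hgdef n'
  have hw0 : ∀ l : ℤ, (l < 0 ∨ (2 ^ (m + 1) * L : ℤ) ≤ l) → wp g h (m + 1) (n' / 2) l = 0 :=
    wp_supp hsupp hgdef (m + 1) (n' / 2)
  have hcpos : (0 : ℤ) < 2 ^ (m + 1) := by positivity
  set c : ℤ := 2 ^ (m + 1) with hc
  set w : ℤ → ℝ := wp g h (m + 1) (n' / 2) with hwdef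
  set a : ℤ → ℝ := uF g h n' with hadef
  set A : ℤ → ℝ := fun v => ∑ᶠ l : ℤ, w l * w (l + v) with hAdef
  have hAv : ∀ v : ℤ, (∑ᶠ l : ℤ, w l * w (l + v)) = A v := fun v => rfl
  simp only [hAv]
  set Jf := Finset.Ico (0 : ℤ) (L : ℤ) with hJf
  set Kf := Finset.Ico (-(L : ℤ)) (L : ℤ) with hKf
  set Lf := Finset.Ico (0 : ℤ) (2 ^ (m + 2) * (L : ℤ)) with hLf
  have hBL : (2 : ℤ) ^ (m + 2) * (L : ℤ) = 2 * (c * L) := by rw [hc]; ring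
  -- expand wp (m+2)
  have wpeq : ∀ v : ℤ, wp g h (m + 2) n' v = ∑ j ∈ Jf, a j * w (v - c * j) := by
    intro v
    show (∑ᶠ k : ℤ, a k * w (v - c * k)) = _
    apply finsum_eq_sum_Ico
    intro k hk
    rw [ha0 k (not_mem_Ico hk), zero_mul]
  -- outer finsum as finite sum
  have main : ∑ᶠ l : ℤ, wp g h (m + 2) n' l * wp g h (m + 2) n' (l + u)
      = ∑ l ∈ Lf, wp g h (m + 2) n' l * wp g h (m + 2) n' (l + u) := by
    apply finsum_eq_sum_Ico
    intro l hl
    rw [wp_supp hsupp hgdef (m + 2) n' l (not_mem_Ico hl), zero_mul]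
  rw [main]
  have expand : ∀ l ∈ Lf, wp g h (m + 2) n' l * wp g h (m + 2) n' (l + u)
      = ∑ j ∈ Jf, ∑ k ∈ Jf, a j * w (l - c * j) * (a k * w (l + u - c * k)) := by
    intro l _
    rw [wpeq l, wpeq (l + u), Finset.sum_mul_sum]
  rw [Finset.sum_congr rfl expand, Finset.sum_comm]
  have swap2 : ∀ j ∈ Jf, ∑ l ∈ Lf, ∑ k ∈ Jf, a j * w (l - c * j) * (a k * w (l + u - c * k))
      = ∑ k ∈ Jf, ∑ l ∈ Lf, a j * w (l - c * j) * (a k * w (l + u - c * k)) :=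
    fun j _ => Finset.sum_comm
  rw [Finset.sum_congr rfl swap2]
  -- inner l-sum evaluates to A
  have innerA : ∀ j ∈ Jf, ∀ k : ℤ,
      ∑ l ∈ Lf, a j * w (l - c * j) * (a k * w (l + u - c * k))
      = a j * a k * A (u - c * (k - j)) := by
    intro j hj k
    have hjb : (0 : ℤ) ≤ j ∧ j < (L : ℤ) := Finset.mem_Ico.mp hj
    have hterm : ∀ l : ℤ, a j * w (l - c * j) * (a k * w (l + u - c * k))
        = a j * a k * (w (l - c * j) * (l - c * j + (u - c * (k - j)) |> w)) := by
      intro l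
      have e : l - c * j + (u - c * (k - j)) = l + u - c * k := by ring
      rw [e]; ring
    rw [Finset.sum_congr rfl (fun l _ => hterm l), ← Finset.mul_sum]
    congr 1
    have back : ∑ l ∈ Lf, w (l - c * j) * w (l - c * j + (u - c * (k - j)))
        = ∑ᶠ l : ℤ, w (l - c * j) * w (l - c * j + (u - c * (k - j))) := by
      symm
      apply finsum_eq_sum_Ico
      intro l hl
      have hz : w (l - c * j) = 0 := by
        apply hw0
        rcases not_mem_Ico hl with hl | hl
        · left; nlinarith [mul_nonneg hcpos.le hjb.1]
        · right; rw [hBL] at hl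
          nlinarith [mul_le_mul_of_nonneg_left (by omega : j ≤ (L : ℤ) - 1) hcpos.le]
      rw [hz, zero_mul]
    rw [back]
    have shift : ∀ l : ℤ, w (l - c * j) * w (l - c * j + (u - c * (k - j)))
        = (fun x : ℤ => w x * w (x + (u - c * (k - j)))) (l + -(c * j)) := by
      intro l
      have e : l + -(c * j) = l - c * j := by ring
      simp only [e]
    rw [finsum_congr shift, finsum_shift (fun x : ℤ => w x * w (x + (u - c * (k - j)))) (-(c * j))]
  rw [Finset.sum_congr rfl (fun j hj => Finset.sum_congr rfl (fun k _ => innerA j hj k))]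
  -- reindex k over Kf via shift
  have reindex : ∀ j ∈ Jf, ∑ k ∈ Jf, a j * a k * A (u - c * (k - j))
      = ∑ k ∈ Kf, a j * a (j + k) * A (u - c * k) := by
    intro j hj
    have hjb : (0 : ℤ) ≤ j ∧ j < (L : ℤ) := Finset.mem_Ico.mp hj
    have tofin : ∑ k ∈ Jf, a j * a k * A (u - c * (k - j))
        = ∑ᶠ k : ℤ, a j * a k * A (u - c * (k - j)) := by
      symm
      apply finsum_eq_sum_Ico
      intro k hk
      rw [ha0 k (not_mem_Ico hk), mul_zero, zero_mul]
    rw [tofin]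
    have shift : ∀ k : ℤ, a j * a k * A (u - c * (k - j))
        = (fun x : ℤ => a j * a (j + x) * A (u - c * x)) (k + -j) := by
      intro k
      have e1 : j + (k + -j) = k := by ring
      have e2 : k + -j = k - j := by ring
      show a j * a k * A (u - c * (k - j)) = a j * a (j + (k + -j)) * A (u - c * (k + -j))
      rw [e1, e2]
    rw [finsum_congr shift, finsum_shift (fun x : ℤ => a j * a (j + x) * A (u - c * x)) (-j)]
    apply finsum_eq_sum_Ico
    intro k hk
    have hz : a (j + k) = 0 := by
      apply ha0
      rcases not_mem_Ico hk with hk | hk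
      · left; omega
      · right; omega
    rw [hz, mul_zero, zero_mul]
  rw [Finset.sum_congr rfl reindex, Finset.sum_comm]
  apply Finset.sum_congr rfl
  intro k _
  rw [Finset.sum_mul]

lemma stepL (hLpos : 0 < L)
    (hsupp : ∀ l : ℤ, (l < 0 ∨ (L : ℤ) ≤ l) → h l = 0)
    (horth_h : ∀ k : ℤ,
      ∑ᶠ l : ℤ, h l * h (l + 2 * k) = (1 / 2) * (if k = 0 then 1 else 0))
    (hgdef : ∀ l : ℤ, g l = (-1 : ℝ) ^ (l + 1) * h ((L : ℤ) - 1 - l))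
    (m n : ℕ) (u : ℤ) :
    (∑ᶠ l : ℤ, wp g h (m + 2) (2 * n) l * wp g h (m + 2) (2 * n) (l + u))
      + (∑ᶠ l : ℤ, wp g h (m + 2) (2 * n + 1) l * wp g h (m + 2) (2 * n + 1) (l + u))
    = ∑ᶠ l : ℤ, wp g h (m + 1) n l * wp g h (m + 1) n (l + u) := by
  rw [childA hsupp hgdef m (2 * n) u, childA hsupp hgdef m (2 * n + 1) u]
  have hdiv1 : 2 * n / 2 = n := by omega
  have hdiv2 : (2 * n + 1) / 2 = n := by omega
  rw [hdiv1, hdiv2, ← Finset.sum_add_distrib]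
  set A : ℤ → ℝ := fun v => ∑ᶠ l : ℤ, wp g h (m + 1) n l * wp g h (m + 1) n (l + v) with hAdef
  have hAv : ∀ v : ℤ, (∑ᶠ l : ℤ, wp g h (m + 1) n l * wp g h (m + 1) n (l + v)) = A v :=
    fun v => rfl
  simp only [hAv]
  have hg' : ∀ k : ℤ, (∑ j ∈ Finset.Ico (0 : ℤ) (L : ℤ), g j * g (j + k)) = AC g k := by
    intro k
    symm
    apply finsum_eq_sum_Ico
    intro j hj
    rw [g_supp hsupp hgdef j (not_mem_Ico hj), zero_mul]
  have hh' : ∀ k : ℤ, (∑ j ∈ Finset.Ico (0 : ℤ) (L : ℤ), h j * h (j + k)) = AC h k := by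
    intro k
    symm
    apply finsum_eq_sum_Ico
    intro j hj
    rw [hsupp j (not_mem_Ico hj), zero_mul]
  have hsum : ∀ k : ℤ,
      (∑ j ∈ Finset.Ico (0 : ℤ) (L : ℤ), uF g h (2 * n) j * uF g h (2 * n) (j + k)) * A (u - 2 ^ (m + 1) * k)
      + (∑ j ∈ Finset.Ico (0 : ℤ) (L : ℤ), uF g h (2 * n + 1) j * uF g h (2 * n + 1) (j + k)) * A (u - 2 ^ (m + 1) * k)
      = (if k = 0 then 1 else 0) * A (u - 2 ^ (m + 1) * k) := by
    intro k
    rw [← add_mul]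
    congr 1
    have key := key_delta hsupp horth_h hgdef k
    rcases Nat.even_or_odd n with ⟨t, ht⟩ | ⟨t, ht⟩
    · have c1 : ∀ l : ℤ, uF g h (2 * n) l = g l := by
        intro l; unfold uF; rw [if_pos (Or.inl (by omega))]
      have c2 : ∀ l : ℤ, uF g h (2 * n + 1) l = h l := by
        intro l; unfold uF; rw [if_neg (by omega)]
      simp only [c1, c2]
      rw [hg', hh', key]
    · have c1 : ∀ l : ℤ, uF g h (2 * n) l = h l := by
        intro l; unfold uF; rw [if_neg (by omega)]
      have c2 : ∀ l : ℤ, uF g h (2 * n + 1) l = g l := by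
        intro l; unfold uF; rw [if_pos (Or.inr (by omega))]
      simp only [c1, c2]
      rw [hg', hh', add_comm, key]
  rw [Finset.sum_congr rfl (fun k _ => hsum k)]
  have final : ∀ k ∈ Finset.Ico (-(L : ℤ)) (L : ℤ),
      (if k = 0 then 1 else 0) * A (u - 2 ^ (m + 1) * k)
      = if k = 0 then A u else 0 := by
    intro k _
    by_cases hk : k = 0
    · subst hk; simp
    · simp [hk]
  rw [Finset.sum_congr rfl final, Finset.sum_ite_eq' (Finset.Ico (-(L : ℤ)) (L : ℤ)) (0 : ℤ)
    (fun _ => A u)]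
  have h0 : (0 : ℤ) ∈ Finset.Ico (-(L : ℤ)) (L : ℤ) := by
    rw [Finset.mem_Ico]
    constructor <;> [omega; exact_mod_cast hLpos]
  rw [if_pos h0]

end Aux

/-- If `h` is a wavelet filter supported in `{0,…,L-1}` (L even, positive)
satisfying the even-shift orthonormality relation with norm `1/2`, and `g` is its
associated scaling filter, then at every scale `m ≥ 1` the wavelet packet filters
jointly satisfy the perfect-reconstruction identity:
`∑_{n=0}^{2^m-1} ∑_l v_{m,n,l} v_{m,n,l+u} = δ_{u,0}` for every integer `u`. -/
theorem stmt7 (L : ℕ) (hLpos : 0 < L) (hLeven : Even L)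
    (h : ℤ → ℝ)
    (hsupp : ∀ l : ℤ, (l < 0 ∨ (L : ℤ) ≤ l) → h l = 0)
    (horth_h : ∀ k : ℤ,
      ∑ᶠ l : ℤ, h l * h (l + 2 * k) = (1 / 2) * (if k = 0 then 1 else 0))
    (g : ℤ → ℝ) (hgdef : ∀ l : ℤ, g l = (-1 : ℝ) ^ (l + 1) * h ((L : ℤ) - 1 - l))
    (m : ℕ) (hm : 1 ≤ m) (u : ℤ) :
    ∑ n ∈ Finset.range (2 ^ m), ∑ᶠ l : ℤ, wp g h m n l * wp g h m n (l + u)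
      = if u = 0 then 1 else 0 := by
  induction m, hm using Nat.le_induction with
  | base =>
    have w0 : ∀ l : ℤ, wp g h 1 0 l = g l := fun l => by simp [wp]
    have w1 : ∀ l : ℤ, wp g h 1 1 l = h l := fun l => by simp [wp]
    have key := key_delta hsupp horth_h hgdef u
    unfold AC at key
    simp only [pow_one, Finset.sum_range_succ, Finset.sum_range_zero, zero_add, w0, w1]
    exact key
  | succ m hm ih =>
    obtain ⟨p, rfl⟩ : ∃ p, m = p + 1 := ⟨m - 1, by omega⟩
    show ∑ n ∈ Finset.range (2 ^ (p + 2)),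
        ∑ᶠ l : ℤ, wp g h (p + 2) n l * wp g h (p + 2) n (l + u) = if u = 0 then 1 else 0
    have h2 : 2 ^ (p + 2) = 2 * 2 ^ (p + 1) := by ring
    rw [h2, sum_range_two_mul]
    rw [Finset.sum_congr rfl (fun n _ => stepL hLpos hsupp horth_h hgdef p n u)]
    exact ih
end

section
/- Let (y_t)_{t∈ℤ} be real random variables with finite fourth moments such that E y_t = 0 for all t, E y_t² = σ² for a constant σ² (independent of t), E(y_s y_t) = 0 for all s ≠ t, and such that all fourth cross-moments factor as for a Gaussian process: for all integers a, b, c, d that are not all equal, E(y_a y_b y_c y_d) = E(y_a y_b)E(y_c y_d) + E(y_a y_c)E(y_b y_d) + E(y_a y_d)E(y_b y_c). For m ≥ 1, 0 ≤ n ≤ 2^m − 1 and t ∈ ℤ define z_{m,n,t} = ∑_{i∈ℤ} ∑_{j>i} v_{m,n,i} v_{m,n,j} y_{t−i} y_{t−j}. Then for all scales m ≥ 1, all 0 ≤ n₁, n₂ ≤ 2^m − 1, every t ∈ ℤ and every integer s, the covariance has the explicit filter expression Cov( z_{m,n₁,t}, z_{m,n₂,t−s} ) = σ⁴ · ∑_{i∈ℤ}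 ∑_{j>i} v_{m,n₁,i} v_{m,n₁,j} v_{m,n₂,i−s} v_{m,n₂,j−s}. -/
open MeasureTheory ProbabilityTheory Filter

/-!
Expand both statistics as sums over index pairs `i < j`. Each has mean zero because the noise
is uncorrelated. For the product, the Gaussian factorisation gives, for `u > v` and `p > q`,
`E[y_u y_v y_p y_q] = σ⁴` if `(u, v) = (p, q)` and `0` otherwise: the crossed pairing
`u = q, v = p` is incompatible with the orders. So in the expanded covariance only the pairs
`(k, l) = (i - s, j - s)` survive.
-/

open Function Finset
open scoped ENNReal

theorem finite_support_finsum_mul_comp_sub {u w : ℤ → ℝ} (hu : u.support.Finite)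
    (hw : w.support.Finite) (c : ℤ) :
    (support fun l => ∑ᶠ k, u k * w (l - c * k)).Finite := by
  refine (hu.image2 (fun k j => c * k + j) hw).subset fun l hl => ?_
  obtain ⟨k, hk⟩ : ∃ k, u k * w (l - c * k) ≠ 0 := by
    by_contra! h
    exact hl (finsum_eq_zero_of_forall_eq_zero h)
  exact ⟨k, left_ne_zero_of_mul hk, l - c * k, right_ne_zero_of_mul hk, by ring⟩

theorem wp_support_finite {g h : ℤ → ℝ} (hg : g.support.Finite) (hh : h.support.Finite) :
    ∀ m n, (support (wp g h m n)).Finite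
  | 0, _ => by simp [wp]
  | 1, n => by
    by_cases hn : n = 0
    · simpa [wp, hn] using hg
    · simpa [wp, hn] using hh
  | m + 2, n => by
    have hu : (support (uF g h n)).Finite := by
      by_cases hn : n % 4 = 0 ∨ n % 4 = 3
      · unfold uF; simpa [hn] using hg
      · unfold uF; simpa [hn] using hh
    simpa [wp] using finite_support_finsum_mul_comp_sub hu
      (wp_support_finite hg hh (m + 1) (n / 2)) (2 ^ (m + 1))

def ltPairs (S : Finset ℤ) : Finset (ℤ × ℤ) := (S ×ˢ S).filter fun p => p.1 < p.2

theorem mem_ltPairs {S : Finset ℤ} {p : ℤ × ℤ} :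
    p ∈ ltPairs S ↔ p.1 ∈ S ∧ p.2 ∈ S ∧ p.1 < p.2 := by
  simp [ltPairs, and_assoc]

def quadForm (S : Finset ℤ) (c x : ℤ → ℝ) : ℝ :=
  ∑ p ∈ ltPairs S, c p.1 * c p.2 * (x p.1 * x p.2)

theorem finsum_finsum_ite_lt_eq_quadForm {c : ℤ → ℝ} {S : Finset ℤ} (hc : c.support ⊆ S)
    (x : ℤ → ℝ) :
    ∑ᶠ i, ∑ᶠ j, (if i < j then c i * c j * x i * x j else 0) = quadForm S c x := by
  have hS : ∀ i, i ∉ S → c i = 0 := fun i hi => by_contra fun h => hi (hc h)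
  have hinner : ∀ i, ∑ᶠ j, (if i < j then c i * c j * x i * x j else 0)
      = ∑ j ∈ S, if i < j then c i * c j * x i * x j else 0 := fun i =>
    finsum_eq_finsetSum_of_support_subset _ fun j hj =>
      by_contra fun hjS => hj (by simp [hS j hjS])
  rw [finsum_congr hinner, finsum_eq_finsetSum_of_support_subset (s := S) _ fun i hi =>
      by_contra fun hiS => hi (by simp [hS i hiS]),
    quadForm, ltPairs, sum_filter (fun p : ℤ × ℤ => p.1 < p.2), sum_product]
  simp only [mul_assoc]

instance ENNReal.holderTriple_four_four_two : ENNReal.HolderTriple 4 4 2 where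
  inv_add_inv_eq_inv := by
    rw [← two_mul, show (4 : ℝ≥0∞) = 2 * 2 by norm_num, ENNReal.mul_inv (by simp) (by simp),
      ← mul_assoc, ENNReal.mul_inv_cancel (by simp) (by simp), one_mul]

section Moments

variable {Ω : Type*} [MeasurableSpace Ω] {μ : Measure Ω}

theorem integrable_mul_mul_of_memLp_four {f g u v : Ω → ℝ} (hf : MemLp f 4 μ)
    (hg : MemLp g 4 μ) (hu : MemLp u 4 μ) (hv : MemLp v 4 μ) :
    Integrable (fun ω => f ω * g ω * (u ω * v ω)) μ :=
  (hg.mul' (r := 2) hf).integrable_mul (hv.mul' (r := 2) hu)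

theorem integrable_mul_of_memLp_four [IsFiniteMeasure μ] {f g : Ω → ℝ} (hf : MemLp f 4 μ)
    (hg : MemLp g 4 μ) : Integrable (fun ω => f ω * g ω) μ :=
  (hg.mul' (r := 2) hf).integrable one_le_two

def HasGaussianFourthMoments (μ : Measure Ω) (y : ℤ → Ω → ℝ) : Prop :=
  ∀ a b c d : ℤ, ¬(a = b ∧ a = c ∧ a = d) →
    ∫ ω, y a ω * y b ω * y c ω * y d ω ∂μ
      = (∫ ω, y a ω * y b ω ∂μ) * (∫ ω, y c ω * y d ω ∂μ)
        + (∫ ω, y a ω * y c ω ∂μ) * (∫ ω, y b ω * y d ω ∂μ)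
        + (∫ ω, y a ω * y d ω ∂μ) * (∫ ω, y b ω * y c ω ∂μ)

variable {y : ℤ → Ω → ℝ} {σ2 : ℝ}

theorem integral_mul_eq_ite (hvar : ∀ t, ∫ ω, y t ω ^ 2 ∂μ = σ2)
    (huncorr : ∀ s t, s ≠ t → ∫ ω, y s ω * y t ω ∂μ = 0) (u v : ℤ) :
    ∫ ω, y u ω * y v ω ∂μ = if u = v then σ2 else 0 := by
  split_ifs with huv
  · simp only [huv, ← sq, hvar]
  · exact huncorr u v huv

theorem integral_mul_mul_of_lt
    (hcov : ∀ u v, ∫ ω, y u ω * y v ω ∂μ = if u = v then σ2 else 0)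
    (hgauss4 : HasGaussianFourthMoments μ y) {u v p q : ℤ} (huv : v < u) (hpq : q < p) :
    ∫ ω, y u ω * y v ω * (y p ω * y q ω) ∂μ = if u = p ∧ v = q then σ2 ^ 2 else 0 := by
  simp only [← mul_assoc]
  rw [hgauss4 u v p q (by omega), hcov, hcov, hcov, hcov, hcov, hcov,
    if_neg huv.ne', if_neg hpq.ne']
  split_ifs <;> first | omega | ring

theorem integral_quadForm_eq_zero [IsFiniteMeasure μ] (hL4 : ∀ t, MemLp (y t) 4 μ)
    (huncorr : ∀ s t, s ≠ t → ∫ ω, y s ω * y t ω ∂μ = 0)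
    (S : Finset ℤ) (c : ℤ → ℝ) (t : ℤ) :
    ∫ ω, quadForm S c (fun i => y (t - i) ω) ∂μ = 0 := by
  unfold quadForm
  rw [integral_finsetSum _ fun p _ =>
    (integrable_mul_of_memLp_four (hL4 _) (hL4 _)).const_mul _]
  refine sum_eq_zero fun p hp => ?_
  have hlt := (mem_ltPairs.1 hp).2.2
  rw [integral_const_mul, huncorr _ _ (by omega), mul_zero]

theorem integral_quadForm_mul_quadForm (hL4 : ∀ t, MemLp (y t) 4 μ)
    (hcov : ∀ u v, ∫ ω, y u ω * y v ω ∂μ = if u = v then σ2 else 0)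
    (hgauss4 : HasGaussianFourthMoments μ y)
    {S : Finset ℤ} {b : ℤ → ℝ} (hb : b.support ⊆ S) (a : ℤ → ℝ) (t s : ℤ) :
    ∫ ω, quadForm S a (fun i => y (t - i) ω) * quadForm S b (fun k => y (t - s - k) ω) ∂μ
      = σ2 ^ 2 * quadForm S a (fun i => b (i - s)) := by
  have hint : ∀ p q : ℤ × ℤ, Integrable (fun ω =>
      a p.1 * a p.2 * (y (t - p.1) ω * y (t - p.2) ω)
        * (b q.1 * b q.2 * (y (t - s - q.1) ω * y (t - s - q.2) ω))) μ := fun p q => by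
    simp_rw [mul_mul_mul_comm _ (y _ _ * y _ _)]
    exact (integrable_mul_mul_of_memLp_four (hL4 _) (hL4 _) (hL4 _) (hL4 _)).const_mul _
  have hterm : ∀ p ∈ ltPairs S, ∀ q ∈ ltPairs S,
      ∫ ω, a p.1 * a p.2 * (y (t - p.1) ω * y (t - p.2) ω)
          * (b q.1 * b q.2 * (y (t - s - q.1) ω * y (t - s - q.2) ω)) ∂μ
        = if q = (p.1 - s, p.2 - s) then σ2 ^ 2 * (a p.1 * a p.2 * (b q.1 * b q.2)) else 0 := by
    intro p hp q hq
    have hp' := (mem_ltPairs.1 hp).2.2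
    have hq' := (mem_ltPairs.1 hq).2.2
    simp_rw [mul_mul_mul_comm _ (y _ _ * y _ _)]
    rw [integral_const_mul, integral_mul_mul_of_lt hcov hgauss4 (by omega) (by omega)]
    simp only [Prod.ext_iff]
    split_ifs <;> first | (exfalso; omega) | ring
  have hcollapse : ∀ p ∈ ltPairs S, ∑ q ∈ ltPairs S,
      (if q = (p.1 - s, p.2 - s) then σ2 ^ 2 * (a p.1 * a p.2 * (b q.1 * b q.2)) else 0)
        = σ2 ^ 2 * (a p.1 * a p.2 * (b (p.1 - s) * b (p.2 - s))) := by
    intro p hp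
    rw [sum_ite_eq']
    split_ifs with hmem
    · rfl
    have hzero : b (p.1 - s) * b (p.2 - s) = 0 := by
      by_contra hne
      exact hmem (mem_ltPairs.2 ⟨hb (left_ne_zero_of_mul hne), hb (right_ne_zero_of_mul hne),
        by simpa using (mem_ltPairs.1 hp).2.2⟩)
    rw [hzero, mul_zero, mul_zero]
  calc _ = ∑ p ∈ ltPairs S, ∑ q ∈ ltPairs S,
        ∫ ω, a p.1 * a p.2 * (y (t - p.1) ω * y (t - p.2) ω)
          * (b q.1 * b q.2 * (y (t - s - q.1) ω * y (t - s - q.2) ω)) ∂μ := by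
        simp_rw [quadForm, sum_mul_sum]
        rw [integral_finsetSum _ fun p _ => integrable_finsetSum _ fun q _ => hint p q]
        exact sum_congr rfl fun p _ => integral_finsetSum _ fun q _ => hint p q
    _ = σ2 ^ 2 * quadForm S a (fun i => b (i - s)) := by
        rw [quadForm, mul_sum]
        exact sum_congr rfl fun p hp => by rw [sum_congr rfl (hterm p hp), hcollapse p hp]

end Moments

theorem stmt12_general (Ω : Type) [MeasureSpace Ω] [IsProbabilityMeasure (ℙ : Measure Ω)]
    (y : ℤ → Ω → ℝ)
    (hL4 : ∀ t : ℤ, MemLp (y t) 4)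
    (σ2 : ℝ) (hvar : ∀ t : ℤ, ∫ ω, (y t ω) ^ 2 = σ2)
    (huncorr : ∀ s t : ℤ, s ≠ t → ∫ ω, y s ω * y t ω = 0)
    (hgauss4 : ∀ a b c d : ℤ, ¬(a = b ∧ a = c ∧ a = d) →
      ∫ ω, y a ω * y b ω * y c ω * y d ω
        = (∫ ω, y a ω * y b ω) * (∫ ω, y c ω * y d ω)
          + (∫ ω, y a ω * y c ω) * (∫ ω, y b ω * y d ω)
          + (∫ ω, y a ω * y d ω) * (∫ ω, y b ω * y c ω))
    (h g : ℤ → ℝ)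
    (hhfin : (Function.support h).Finite) (hgfin : (Function.support g).Finite)
    (m : ℕ) (n₁ n₂ : ℕ)
    (t s : ℤ) :
    (∫ ω, (∑ᶠ i : ℤ, ∑ᶠ j : ℤ,
          if i < j then wp g h m n₁ i * wp g h m n₁ j * y (t - i) ω * y (t - j) ω else 0)
        * (∑ᶠ i : ℤ, ∑ᶠ j : ℤ,
          if i < j then
            wp g h m n₂ i * wp g h m n₂ j * y (t - s - i) ω * y (t - s - j) ω
          else 0))
      - (∫ ω, ∑ᶠ i : ℤ, ∑ᶠ j : ℤ,
          if i < j then wp g h m n₁ i * wp g h m n₁ j * y (t - i) ω * y (t - j) ω else 0)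
        * (∫ ω, ∑ᶠ i : ℤ, ∑ᶠ j : ℤ,
          if i < j then
            wp g h m n₂ i * wp g h m n₂ j * y (t - s - i) ω * y (t - s - j) ω
          else 0)
      = σ2 ^ 2 * ∑ᶠ i : ℤ, ∑ᶠ j : ℤ,
          if i < j then
            wp g h m n₁ i * wp g h m n₁ j * wp g h m n₂ (i - s) * wp g h m n₂ (j - s)
          else 0 := by
  have hfin := (wp_support_finite hgfin hhfin m n₁).union (wp_support_finite hgfin hhfin m n₂)
  have hS₁ : (wp g h m n₁).support ⊆ hfin.toFinset := by simp
  have hS₂ : (wp g h m n₂).support ⊆ hfin.toFinset := by simp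
  simp only [finsum_finsum_ite_lt_eq_quadForm hS₁, finsum_finsum_ite_lt_eq_quadForm hS₂]
  rw [integral_quadForm_mul_quadForm hL4 (integral_mul_eq_ite hvar huncorr) hgauss4 hS₂,
    integral_quadForm_eq_zero hL4 huncorr, integral_quadForm_eq_zero hL4 huncorr, mul_zero,
    sub_zero]

/-- For mean-zero white noise with constant variance `σ²` whose fourth
cross-moments factor as for a Gaussian process, the covariance of the quadratic
statistics `z_{m,n,t} = ∑_i ∑_{j>i} v_{m,n,i} v_{m,n,j} y_{t-i} y_{t-j}` has the
explicit filter expression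
`Cov(z_{m,n₁,t}, z_{m,n₂,t-s}) = σ⁴ ∑_i ∑_{j>i} v_{m,n₁,i} v_{m,n₁,j} v_{m,n₂,i-s} v_{m,n₂,j-s}`. -/
theorem stmt12 (Ω : Type) [MeasureSpace Ω] [IsProbabilityMeasure (ℙ : Measure Ω)]
    (y : ℤ → Ω → ℝ)
    (hL4 : ∀ t : ℤ, MemLp (y t) 4)
    (hmean : ∀ t : ℤ, ∫ ω, y t ω = 0)
    (σ2 : ℝ) (hvar : ∀ t : ℤ, ∫ ω, (y t ω) ^ 2 = σ2)
    (huncorr : ∀ s t : ℤ, s ≠ t → ∫ ω, y s ω * y t ω = 0)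
    (hgauss4 : ∀ a b c d : ℤ, ¬(a = b ∧ a = c ∧ a = d) →
      ∫ ω, y a ω * y b ω * y c ω * y d ω
        = (∫ ω, y a ω * y b ω) * (∫ ω, y c ω * y d ω)
          + (∫ ω, y a ω * y c ω) * (∫ ω, y b ω * y d ω)
          + (∫ ω, y a ω * y d ω) * (∫ ω, y b ω * y c ω))
    (h g : ℤ → ℝ)
    (hhfin : (Function.support h).Finite) (hgfin : (Function.support g).Finite)
    (m : ℕ) (hm : 1 ≤ m) (n₁ n₂ : ℕ)
    (hn₁ : n₁ ≤ 2 ^ m - 1) (hn₂ : n₂ ≤ 2 ^ m - 1) (t s : ℤ) :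
    (∫ ω, (∑ᶠ i : ℤ, ∑ᶠ j : ℤ,
          if i < j then wp g h m n₁ i * wp g h m n₁ j * y (t - i) ω * y (t - j) ω else 0)
        * (∑ᶠ i : ℤ, ∑ᶠ j : ℤ,
          if i < j then
            wp g h m n₂ i * wp g h m n₂ j * y (t - s - i) ω * y (t - s - j) ω
          else 0))
      - (∫ ω, ∑ᶠ i : ℤ, ∑ᶠ j : ℤ,
          if i < j then wp g h m n₁ i * wp g h m n₁ j * y (t - i) ω * y (t - j) ω else 0)
        * (∫ ω, ∑ᶠ i : ℤ, ∑ᶠ j : ℤ,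
          if i < j then
            wp g h m n₂ i * wp g h m n₂ j * y (t - s - i) ω * y (t - s - j) ω
          else 0)
      = σ2 ^ 2 * ∑ᶠ i : ℤ, ∑ᶠ j : ℤ,
          if i < j then
            wp g h m n₁ i * wp g h m n₁ j * wp g h m n₂ (i - s) * wp g h m n₂ (j - s)
          else 0 :=
  stmt12_general Ω y hL4 σ2 hvar huncorr hgauss4 h g hhfin hgfin m n₁ n₂ t s
end

section
/- Let a : ℤ → ℝ vanish outside {0, 1, …, L_m − 1} for some positive integer L_m, and let (y_t)_{t∈ℤ} be independent real random variables with E y_t = 0 and E y_t⁴ ≤ K for all t, for some constant K. Define z_t = ∑_{i∈ℤ} ∑_{j>i} a_i a_j y_{t−i} y_{t−j}. Then for every positive integer T, E[ ( ∑_{t=1}^{T} z_t )² ] ≤ T · (2 L_m + 1) · K · ( ∑_{0≤i<j<L_m} |a_i a_j| )². In particular, (1/T) ∑_{t=1}^{T} z_t → 0 in L² as T → ∞. -/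
/-!
Write `z_t = ∑_{0 ≤ i < j < L} a_i a_j y_{t-i} y_{t-j}` and `S = ∑_{0 ≤ i < j < L} |a_i a_j|`.
Expanding `E[z_t z_{t'}]` gives a combination of moments `E[y_{s₁} y_{s₂} y_{s₃} y_{s₄}]`, each of
absolute value at most `K` by AM–GM, so `E[z_t z_{t'}] ≤ K S²`. If `|t - t'| ≥ L`, the pair
`{t - i, t - j}` (with `i ≠ j`) is disjoint from `{t' - k, t' - l}`, so by independence each moment
factors through `E[y_{t-i}] = 0`. Hence each row of `E[(∑_{t=1}^T z_t)²] = ∑_{t,t'} E[z_t z_{t'}]`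
has at most `2L + 1` nonzero terms, which gives the bound; dividing by `T²` gives `L²` convergence.
-/

open MeasureTheory ProbabilityTheory Filter Finset

lemma abs_mul_mul_mul_le (x₁ x₂ x₃ x₄ : ℝ) :
    |x₁ * x₂ * (x₃ * x₄)| ≤ (x₁ ^ 4 + x₂ ^ 4 + x₃ ^ 4 + x₄ ^ 4) / 4 := by
  rw [abs_mul]
  nlinarith [sq_nonneg (|x₁ * x₂| - |x₃ * x₄|), sq_nonneg (x₁ ^ 2 - x₂ ^ 2),
    sq_nonneg (x₃ ^ 2 - x₄ ^ 2), sq_abs (x₁ * x₂), sq_abs (x₃ * x₄)]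

section Moments

variable {Ω : Type*} [MeasurableSpace Ω] {μ : Measure Ω}

lemma MeasureTheory.MemLp.mul_of_four {X Y : Ω → ℝ} (hX : MemLp X 4 μ) (hY : MemLp Y 4 μ) :
    MemLp (fun ω => X ω * Y ω) 2 μ :=
  haveI : ENNReal.HolderTriple 4 4 2 := ⟨by
    simp only [← one_div]; rw [ENNReal.div_add_div_same, ENNReal.div_eq_div_iff] <;> norm_num⟩
  hY.mul' hX

variable {ι : Type*} {X : ι → Ω → ℝ}

lemma integrable_mul_mul_mul_of_memLp_four (hX : ∀ i, MemLp (X i) 4 μ) (i j k l : ι) :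
    Integrable (fun ω => X i ω * X j ω * (X k ω * X l ω)) μ :=
  ((hX i).mul_of_four (hX j)).integrable_mul ((hX k).mul_of_four (hX l))

lemma abs_integral_mul_mul_mul_le {K : ℝ} (hX : ∀ i, MemLp (X i) 4 μ)
    (hK : ∀ i, ∫ ω, X i ω ^ 4 ∂μ ≤ K) (i j k l : ι) :
    |∫ ω, X i ω * X j ω * (X k ω * X l ω) ∂μ| ≤ K := by
  have hfourth : ∀ i, Integrable (fun ω => X i ω ^ 4) μ := fun i =>
    (integrable_mul_mul_mul_of_memLp_four hX i i i i).congr (.of_forall fun ω => by ring)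
  calc |∫ ω, X i ω * X j ω * (X k ω * X l ω) ∂μ|
      ≤ ∫ ω, |X i ω * X j ω * (X k ω * X l ω)| ∂μ := abs_integral_le_integral_abs
    _ ≤ ∫ ω, (X i ω ^ 4 + X j ω ^ 4 + X k ω ^ 4 + X l ω ^ 4) / 4 ∂μ :=
        integral_mono_of_nonneg (.of_forall fun _ => abs_nonneg _)
          (((((hfourth i).add (hfourth j)).add (hfourth k)).add (hfourth l)).div_const 4)
          (.of_forall fun ω => abs_mul_mul_mul_le _ _ _ _)
    _ = ((∫ ω, X i ω ^ 4 ∂μ) + (∫ ω, X j ω ^ 4 ∂μ) + (∫ ω, X k ω ^ 4 ∂μ)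
          + ∫ ω, X l ω ^ 4 ∂μ) / 4 := by
        rw [integral_div, integral_add _ (hfourth l), integral_add _ (hfourth k),
          integral_add (hfourth i) (hfourth j)]
        all_goals fun_prop
    _ ≤ K := by linarith [hK i, hK j, hK k, hK l]

lemma integral_mul_mul_mul_eq_zero (hind : iIndepFun X μ) (hmeas : ∀ i, Measurable (X i))
    {i j k l : ι} (hmean : ∫ ω, X i ω ∂μ = 0) (hij : i ≠ j) (hik : i ≠ k) (hil : i ≠ l)
    (hjk : j ≠ k) (hjl : j ≠ l) :
    ∫ ω, X i ω * X j ω * (X k ω * X l ω) ∂μ = 0 := by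
  have hpair : ∫ ω, X i ω * X j ω ∂μ = 0 := by
    rw [← Pi.mul_def, (hind.indepFun hij).integral_mul_eq_mul_integral
      (hmeas i).aestronglyMeasurable (hmeas j).aestronglyMeasurable, hmean, zero_mul]
  have := (hind.indepFun_mul_mul hmeas i j k l hik hil hjk hjl).integral_mul_eq_mul_integral
    ((hmeas i).mul (hmeas j)).aestronglyMeasurable ((hmeas k).mul (hmeas l)).aestronglyMeasurable
  simpa [hpair] using this

end Moments

section Bilinear

variable {Ω ι κ : Type*} [MeasurableSpace Ω] {μ : Measure Ω}
  {s : Finset ι} {s' : Finset κ} (c : ι → ℝ) (d : κ → ℝ) {U : ι → Ω → ℝ} {V : κ → Ω → ℝ}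

lemma integral_sum_mul_sum (h : ∀ i ∈ s, ∀ j ∈ s', Integrable (fun ω => U i ω * V j ω) μ) :
    ∫ ω, (∑ i ∈ s, c i * U i ω) * (∑ j ∈ s', d j * V j ω) ∂μ
      = ∑ i ∈ s, ∑ j ∈ s', c i * d j * ∫ ω, U i ω * V j ω ∂μ := by
  have hterm : ∀ i ∈ s, ∀ j ∈ s', Integrable (fun ω => c i * U i ω * (d j * V j ω)) μ :=
    fun i hi j hj => ((h i hi j hj).const_mul (c i * d j)).congr (.of_forall fun ω => by ring)
  simp_rw [sum_mul_sum]
  rw [integral_finsetSum _ fun i hi => integrable_finsetSum _ (hterm i hi)]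
  refine sum_congr rfl fun i hi => ?_
  rw [integral_finsetSum _ (hterm i hi)]
  refine sum_congr rfl fun j _ => ?_
  rw [← integral_const_mul]
  exact integral_congr_ae (.of_forall fun ω => by ring)

lemma abs_integral_sum_mul_sum_le {K : ℝ}
    (h : ∀ i ∈ s, ∀ j ∈ s', Integrable (fun ω => U i ω * V j ω) μ)
    (hK : ∀ i ∈ s, ∀ j ∈ s', |∫ ω, U i ω * V j ω ∂μ| ≤ K) :
    |∫ ω, (∑ i ∈ s, c i * U i ω) * (∑ j ∈ s', d j * V j ω) ∂μ|
      ≤ (∑ i ∈ s, |c i|) * (∑ j ∈ s', |d j|) * K := by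
  rw [integral_sum_mul_sum c d h, sum_mul_sum, sum_mul]
  refine (abs_sum_le_sum_abs _ _).trans (sum_le_sum fun i hi => ?_)
  rw [sum_mul]
  refine (abs_sum_le_sum_abs _ _).trans (sum_le_sum fun j hj => ?_)
  rw [abs_mul, abs_mul]
  exact mul_le_mul_of_nonneg_left (hK i hi j hj) (by positivity)

end Bilinear

lemma card_filter_abs_sub_lt_le (s : Finset ℤ) (t : ℤ) (L : ℕ) :
    #{t' ∈ s | |t - t'| < L} ≤ 2 * L + 1 := by
  calc #{t' ∈ s | |t - t'| < L} ≤ #(Icc (t - L) (t + L)) := card_le_card fun t' ht' => by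
        simp only [mem_filter, mem_Icc] at ht' ⊢
        have := abs_lt.mp ht'.2
        omega
    _ = 2 * L + 1 := by rw [Int.card_Icc]; omega

section FiniteRangeDependence

variable {Ω : Type*} [MeasurableSpace Ω] {μ : Measure Ω}

lemma integral_sq_sum_le_of_integral_mul_eq_zero_of_le_abs_sub {z : ℤ → Ω → ℝ} {L : ℕ} {C : ℝ}
    (hz : ∀ t, MemLp (z t) 2 μ) (hle : ∀ t t', ∫ ω, z t ω * z t' ω ∂μ ≤ C)
    (hfar : ∀ t t', (L : ℤ) ≤ |t - t'| → ∫ ω, z t ω * z t' ω ∂μ = 0) (s : Finset ℤ) :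
    ∫ ω, (∑ t ∈ s, z t ω) ^ 2 ∂μ ≤ #s * (2 * L + 1) * C := by
  have hC : 0 ≤ C := (integral_nonneg fun ω => mul_self_nonneg (z 0 ω)).trans (hle 0 0)
  have hint : ∀ t t', Integrable (fun ω => z t ω * z t' ω) μ :=
    fun t t' => (hz t).integrable_mul (hz t')
  calc ∫ ω, (∑ t ∈ s, z t ω) ^ 2 ∂μ = ∑ t ∈ s, ∑ t' ∈ s, ∫ ω, z t ω * z t' ω ∂μ := by
        simpa [sq] using integral_sum_mul_sum (s := s) (s' := s) 1 1 fun t _ t' _ => hint t t'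
    _ ≤ ∑ t ∈ s, ∑ t' ∈ s with |t - t'| < L, C := by
        refine sum_le_sum fun t _ => ?_
        rw [sum_filter]
        refine sum_le_sum fun t' _ => ?_
        split_ifs with hnear
        · exact hle t t'
        · exact (hfar t t' (not_lt.mp hnear)).le
    _ ≤ ∑ t ∈ s, (2 * L + 1) * C := by
        refine sum_le_sum fun t _ => ?_
        rw [sum_const, nsmul_eq_mul]
        gcongr
        exact_mod_cast card_filter_abs_sub_lt_le s t L
    _ = #s * (2 * L + 1) * C := by rw [sum_const, nsmul_eq_mul, mul_assoc]

end FiniteRangeDependence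

lemma tendsto_integral_sq_inv_mul_of_integral_sq_le {Ω : Type*} [MeasurableSpace Ω]
    {μ : Measure Ω} {S : ℕ → Ω → ℝ} {C : ℝ} (h : ∀ T : ℕ, ∫ ω, S T ω ^ 2 ∂μ ≤ T * C) :
    Tendsto (fun T : ℕ => ∫ ω, ((1 / (T : ℝ)) * S T ω) ^ 2 ∂μ) atTop (nhds 0) := by
  refine squeeze_zero' (.of_forall fun T => integral_nonneg fun ω => sq_nonneg _) ?_
    (tendsto_const_div_atTop_nhds_zero_nat C)
  filter_upwards [eventually_gt_atTop 0] with T hT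
  have hT : (0 : ℝ) < T := Nat.cast_pos.mpr hT
  calc ∫ ω, ((1 / (T : ℝ)) * S T ω) ^ 2 ∂μ = (1 / (T : ℝ)) ^ 2 * ∫ ω, S T ω ^ 2 ∂μ := by
        rw [← integral_const_mul]
        exact integral_congr_ae (.of_forall fun ω => by ring)
    _ ≤ (1 / (T : ℝ)) ^ 2 * (T * C) := by gcongr; exact h T
    _ = C / T := by field_simp

lemma finsum_finsum_eq_sum_sum {α β M : Type*} [AddCommMonoid M] (s : Finset α) (s' : Finset β)
    (f : α → β → M) (hf : ∀ i j, f i j ≠ 0 → i ∈ s ∧ j ∈ s') :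
    ∑ᶠ i, ∑ᶠ j, f i j = ∑ i ∈ s, ∑ j ∈ s', f i j := by
  rw [finsum_congr fun i => finsum_eq_sum_of_support_subset (f i) fun j hj => (hf i j hj).2]
  refine finsum_eq_sum_of_support_subset _ fun i hi => ?_
  obtain ⟨j, -, hj⟩ := exists_ne_zero_of_sum_ne_zero hi
  exact (hf i j hj).1

noncomputable def lagPairs (L : ℕ) : Finset (ℤ × ℤ) :=
  {p ∈ Ico (0 : ℤ) L ×ˢ Ico (0 : ℤ) L | p.1 < p.2}

lemma mem_lagPairs {L : ℕ} {p : ℤ × ℤ} : p ∈ lagPairs L ↔ 0 ≤ p.1 ∧ p.1 < p.2 ∧ p.2 < L := by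
  simp only [lagPairs, mem_filter, mem_product, mem_Ico]
  omega

lemma finsum_finsum_eq_sum_lagPairs {M : Type*} [AddCommMonoid M] {L : ℕ} (f : ℤ → ℤ → M)
    (hf : ∀ i j, f i j ≠ 0 → 0 ≤ i ∧ i < j ∧ j < L) :
    ∑ᶠ i, ∑ᶠ j, f i j = ∑ p ∈ lagPairs L, f p.1 p.2 := by
  rw [finsum_finsum_eq_sum_sum (Ico (0 : ℤ) L) (Ico (0 : ℤ) L) f fun i j hij => by
    simp only [mem_Ico]; have := hf i j hij; omega]
  rw [← sum_product', lagPairs, sum_filter]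
  refine sum_congr rfl fun p _ => ?_
  split_ifs with hp
  · rfl
  · exact not_not.mp fun hne => hp (hf p.1 p.2 hne).2.1

lemma finsum_abs_eq_sum_lagPairs (a : ℤ → ℝ) (L : ℕ) :
    (∑ᶠ i : ℤ, ∑ᶠ j : ℤ, if 0 ≤ i ∧ i < j ∧ j < (L : ℤ) then |a i * a j| else 0)
      = ∑ p ∈ lagPairs L, |a p.1 * a p.2| := by
  rw [finsum_finsum_eq_sum_lagPairs _ fun i j hij => of_not_not fun h => hij (if_neg h)]
  exact sum_congr rfl fun p hp => if_pos (mem_lagPairs.mp hp)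

section LagProductSum

variable {Ω : Type*}

noncomputable def lagProductSum (a : ℤ → ℝ) (y : ℤ → Ω → ℝ) (L : ℕ) (t : ℤ) (ω : Ω) : ℝ :=
  ∑ p ∈ lagPairs L, a p.1 * a p.2 * (y (t - p.1) ω * y (t - p.2) ω)

variable {a : ℤ → ℝ} {y : ℤ → Ω → ℝ} {L : ℕ}

lemma finsum_eq_lagProductSum (ha : ∀ l : ℤ, (l < 0 ∨ (L : ℤ) ≤ l) → a l = 0) (t : ℤ) (ω : Ω) :
    ∑ᶠ i : ℤ, ∑ᶠ j : ℤ, (if i < j then a i * a j * y (t - i) ω * y (t - j) ω else 0)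
      = lagProductSum a y L t ω := by
  rw [finsum_finsum_eq_sum_lagPairs _ fun i j hij => ?_]
  · exact sum_congr rfl fun p hp => by rw [if_pos (mem_lagPairs.mp hp).2.1]; ring
  by_contra hout
  refine hij (ite_eq_right_iff.mpr fun hlt => ?_)
  rcases (by omega : i < 0 ∨ (L : ℤ) ≤ j) with hi | hj
  · simp [ha i (.inl hi)]
  · simp [ha j (.inr hj)]

variable [MeasurableSpace Ω] {μ : Measure Ω}

lemma memLp_lagProductSum (hy : ∀ t, MemLp (y t) 4 μ) (t : ℤ) :
    MemLp (lagProductSum a y L t) 2 μ :=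
  memLp_finsetSum _ fun _ _ => ((hy _).mul_of_four (hy _)).const_mul _

lemma integral_lagProductSum_mul_le {K : ℝ} (hy : ∀ t, MemLp (y t) 4 μ)
    (hK : ∀ t, ∫ ω, y t ω ^ 4 ∂μ ≤ K) (t t' : ℤ) :
    ∫ ω, lagProductSum a y L t ω * lagProductSum a y L t' ω ∂μ
      ≤ (∑ p ∈ lagPairs L, |a p.1 * a p.2|) ^ 2 * K := by
  rw [sq]
  exact (le_abs_self _).trans (abs_integral_sum_mul_sum_le _ _
    (fun _ _ _ _ => integrable_mul_mul_mul_of_memLp_four hy _ _ _ _)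
    fun _ _ _ _ => abs_integral_mul_mul_mul_le hy hK _ _ _ _)

lemma integral_lagProductSum_mul_eq_zero (hy : ∀ t, MemLp (y t) 4 μ) (hind : iIndepFun y μ)
    (hmeas : ∀ t, Measurable (y t)) (hmean : ∀ t, ∫ ω, y t ω ∂μ = 0) {t t' : ℤ}
    (hfar : (L : ℤ) ≤ |t - t'|) :
    ∫ ω, lagProductSum a y L t ω * lagProductSum a y L t' ω ∂μ = 0 := by
  have hfar' : (L : ℤ) ≤ t - t' ∨ (L : ℤ) ≤ -(t - t') := le_abs.mp hfar
  unfold lagProductSum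
  rw [integral_sum_mul_sum _ _ fun _ _ _ _ => integrable_mul_mul_mul_of_memLp_four hy _ _ _ _]
  refine sum_eq_zero fun p hp => sum_eq_zero fun q hq => ?_
  have hp := mem_lagPairs.mp hp
  have hq := mem_lagPairs.mp hq
  rw [integral_mul_mul_mul_eq_zero hind hmeas (hmean _) (by omega) (by omega) (by omega)
    (by omega) (by omega), mul_zero]

end LagProductSum

theorem stmt13_general (Ω : Type) [MeasureSpace Ω]
    (Lm : ℕ)
    (a : ℤ → ℝ) (hasupp : ∀ l : ℤ, (l < 0 ∨ (Lm : ℤ) ≤ l) → a l = 0)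
    (y : ℤ → Ω → ℝ) (hmeas : ∀ t : ℤ, Measurable (y t))
    (hind : iIndepFun y ℙ)
    (hL4 : ∀ t : ℤ, MemLp (y t) 4)
    (hmean : ∀ t : ℤ, ∫ ω, y t ω = 0)
    (K : ℝ) (hK : ∀ t : ℤ, ∫ ω, (y t ω) ^ 4 ≤ K) :
    (∀ T : ℕ, 0 < T →
      ∫ ω, (∑ t ∈ Finset.Icc (1 : ℤ) (T : ℤ), ∑ᶠ i : ℤ, ∑ᶠ j : ℤ,
          if i < j then a i * a j * y (t - i) ω * y (t - j) ω else 0) ^ 2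
        ≤ (T : ℝ) * (2 * (Lm : ℝ) + 1) * K
          * (∑ᶠ i : ℤ, ∑ᶠ j : ℤ,
              if 0 ≤ i ∧ i < j ∧ j < (Lm : ℤ) then |a i * a j| else 0) ^ 2)
    ∧ Tendsto (fun T : ℕ =>
        ∫ ω, ((1 / (T : ℝ)) * ∑ t ∈ Finset.Icc (1 : ℤ) (T : ℤ), ∑ᶠ i : ℤ, ∑ᶠ j : ℤ,
          if i < j then a i * a j * y (t - i) ω * y (t - j) ω else 0) ^ 2)
        atTop (nhds 0) := by
  have hbound (T : ℕ) : ∫ ω, (∑ t ∈ Icc (1 : ℤ) T, lagProductSum a y Lm t ω) ^ 2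
      ≤ T * ((2 * Lm + 1) * ((∑ p ∈ lagPairs Lm, |a p.1 * a p.2|) ^ 2 * K)) := by
    have := integral_sq_sum_le_of_integral_mul_eq_zero_of_le_abs_sub
      (z := lagProductSum a y Lm)
      (memLp_lagProductSum hL4) (integral_lagProductSum_mul_le hL4 hK)
      (fun _ _ => integral_lagProductSum_mul_eq_zero hL4 hind hmeas hmean) (Icc (1 : ℤ) T)
    rwa [Int.card_Icc, add_sub_cancel_right, Int.toNat_natCast, mul_assoc] at this
  simp_rw [finsum_eq_lagProductSum hasupp, finsum_abs_eq_sum_lagPairs]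
  exact ⟨fun T _ => (hbound T).trans_eq (by ring),
    tendsto_integral_sq_inv_mul_of_integral_sq_le hbound⟩

/-- For independent mean-zero random variables with uniformly bounded
fourth moments and a filter `a` supported in `{0,…,L_m-1}`, the statistic
`z_t = ∑_i ∑_{j>i} a_i a_j y_{t-i} y_{t-j}` satisfies
`E[(∑_{t=1}^T z_t)²] ≤ T (2 L_m + 1) K (∑_{0 ≤ i < j < L_m} |a_i a_j|)²`;
in particular `(1/T) ∑_{t=1}^T z_t → 0` in `L²` as `T → ∞`. -/
theorem stmt13 (Ω : Type) [MeasureSpace Ω] [IsProbabilityMeasure (ℙ : Measure Ω)]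
    (Lm : ℕ) (hLm : 0 < Lm)
    (a : ℤ → ℝ) (hasupp : ∀ l : ℤ, (l < 0 ∨ (Lm : ℤ) ≤ l) → a l = 0)
    (y : ℤ → Ω → ℝ) (hmeas : ∀ t : ℤ, Measurable (y t))
    (hind : iIndepFun y ℙ)
    (hL4 : ∀ t : ℤ, MemLp (y t) 4)
    (hmean : ∀ t : ℤ, ∫ ω, y t ω = 0)
    (K : ℝ) (hK : ∀ t : ℤ, ∫ ω, (y t ω) ^ 4 ≤ K) :
    (∀ T : ℕ, 0 < T →
      ∫ ω, (∑ t ∈ Finset.Icc (1 : ℤ) (T : ℤ), ∑ᶠ i : ℤ, ∑ᶠ j : ℤ,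
          if i < j then a i * a j * y (t - i) ω * y (t - j) ω else 0) ^ 2
        ≤ (T : ℝ) * (2 * (Lm : ℝ) + 1) * K
          * (∑ᶠ i : ℤ, ∑ᶠ j : ℤ,
              if 0 ≤ i ∧ i < j ∧ j < (Lm : ℤ) then |a i * a j| else 0) ^ 2)
    ∧ Tendsto (fun T : ℕ =>
        ∫ ω, ((1 / (T : ℝ)) * ∑ t ∈ Finset.Icc (1 : ℤ) (T : ℤ), ∑ᶠ i : ℤ, ∑ᶠ j : ℤ,
          if i < j then a i * a j * y (t - i) ω * y (t - j) ω else 0) ^ 2)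
        atTop (nhds 0) :=
  stmt13_general Ω Lm a hasupp y hmeas hind hL4 hmean K hK
end

section
/- Let h, g : ℤ → ℝ satisfy h_l = g_l = 0 for l < 0 and for l ≥ L, where L is a positive integer. Then for every m ≥ 1 and every 0 ≤ n ≤ 2^m − 1, the wavelet packet filter v_{m,n} is supported in {0, 1, …, L_m − 1}, i.e. v_{m,n,l} = 0 whenever l < 0 or l ≥ L_m, where L_m = (2^m − 1)(L − 1) + 1. -/
open MeasureTheory ProbabilityTheory Filter

lemma aux15 (L : ℕ) (hLpos : 0 < L)
    (h g : ℤ → ℝ)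
    (hsupp : ∀ l : ℤ, (l < 0 ∨ (L : ℤ) ≤ l) → h l = 0)
    (gsupp : ∀ l : ℤ, (l < 0 ∨ (L : ℤ) ≤ l) → g l = 0) :
    ∀ (m : ℕ) (n : ℕ) (l : ℤ),
      (l < 0 ∨ ((2:ℤ) ^ (m+1) - 1) * ((L:ℤ) - 1) + 1 ≤ l) → wp g h (m+1) n l = 0 := by
  have hu : ∀ (n : ℕ) (k : ℤ), (k < 0 ∨ (L : ℤ) ≤ k) → uF g h n k = 0 := by
    intro n k hk
    unfold uF
    split_ifs
    · exact gsupp k hk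
    · exact hsupp k hk
  intro m
  induction m with
  | zero =>
      intro n l hl
      show (if n = 0 then g l else h l) = 0
      have hl' : l < 0 ∨ (L : ℤ) ≤ l := by
        rcases hl with hl | hl
        · exact Or.inl hl
        · right
          have e : ((2:ℤ) ^ (0+1) - 1) * ((L:ℤ) - 1) + 1 = L := by norm_num
          linarith [e ▸ hl]
      split_ifs
      · exact gsupp l hl'
      · exact hsupp l hl'
  | succ m ih =>
      intro n l hl
      show (∑ᶠ k : ℤ, uF g h n k * wp g h (m + 1) (n / 2) (l - 2 ^ (m + 1) * k)) = 0
      apply finsum_eq_zero_of_forall_eq_zero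
      intro k
      by_cases hk : k < 0 ∨ (L : ℤ) ≤ k
      · rw [hu n k hk, zero_mul]
      · push_neg at hk
        obtain ⟨hk0, hkL⟩ := hk
        have hL1 : k ≤ (L : ℤ) - 1 := by linarith
        have h2 : (0:ℤ) < 2 ^ (m+1) := by positivity
        have : wp g h (m + 1) (n / 2) (l - 2 ^ (m + 1) * k) = 0 := by
          apply ih
          rcases hl with hl | hl
          · left; nlinarith
          · right
            have : ((2:ℤ) ^ (m+2) - 1) * ((L:ℤ) - 1) + 1 ≤ l := hl
            have hpow : ((2:ℤ) ^ (m+2)) = 2 * 2 ^ (m+1) := by ring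
            nlinarith [mul_le_mul_of_nonneg_left hL1 (le_of_lt h2)]
        rw [this, mul_zero]

/-- If `h` and `g` vanish outside `{0,…,L-1}`, then every wavelet packet
filter `v_{m,n}` (for `m ≥ 1`, `0 ≤ n ≤ 2^m - 1`) is supported in `{0,…,L_m-1}` with
`L_m = (2^m - 1)(L - 1) + 1`. -/
theorem stmt15 (L : ℕ) (hLpos : 0 < L)
    (h g : ℤ → ℝ)
    (hsupp : ∀ l : ℤ, (l < 0 ∨ (L : ℤ) ≤ l) → h l = 0)
    (gsupp : ∀ l : ℤ, (l < 0 ∨ (L : ℤ) ≤ l) → g l = 0)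
    (m : ℕ) (hm : 1 ≤ m) (n : ℕ) (hn : n ≤ 2 ^ m - 1) (l : ℤ)
    (hl : l < 0 ∨ ((2 ^ m - 1) * (L - 1) + 1 : ℕ) ≤ l) :
    wp g h m n l = 0 := by
  obtain ⟨m', rfl⟩ : ∃ m', m = m' + 1 := ⟨m - 1, (Nat.succ_pred_eq_of_pos hm).symm⟩
  apply aux15 L hLpos h g hsupp gsupp
  rcases hl with hl | hl
  · exact Or.inl hl
  · right
    have h1 : (1:ℕ) ≤ 2 ^ (m'+1) := Nat.one_le_two_pow
    have : (((2 ^ (m'+1) - 1) * (L - 1) + 1 : ℕ) : ℤ) = ((2:ℤ) ^ (m'+1) - 1) * ((L:ℤ) - 1) + 1 := by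
      push_cast [h1, hLpos]
      ring
    linarith [this ▸ hl]
end
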